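/- arXiv:1701.04936 — 6 statements merged into one kernel-verified Lean document; each statement's English description precedes it below -/
import Mathlib

section
/- For every n ≥ 1, the kernel P_t(x, y) := (t/(2√π)) ∫₀^∞ u^{−3/2} e^{−t²/(4u)} p_u(x, y) du, where p_u(x, y) = (4πu)^{-n/2} e^{−x₁−y₁} e^{−u} e^{−|x−y|²/(4u)}, satisfies: there exists C = C(n) such that for all x, y with |x − y| > 1 and all t > 0, ∫₀^∞ p_u(x, y) du/u ≤ C · e^{−x₁ − y₁ − |x − y|} · |x − y|^{−(n+1)/2}. -/
/-!
Since `u + r²/(4u) = r + (2u - r)²/(4u)`, the integral equals `e^{-x₁-y₁-r} (4π)^{-n/2}` times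
`∫₀^∞ u^{-s-1} e^{-(2u-r)²/(4u)} du` with `s = n/2`, `r = |x - y|`, and this is `O(r^{-s-1/2})`.
The mass sits in a window of width `√r` around `u = r/2`, where `u^{-s-1} ≍ r^{-s-1}`. Away from it
the integrand is dominated by `u^{-s-1} e^{-r²/(16u)}` for `u ≤ r/4`, an inverse Gamma integral of
size `r^{-2s}`, and by `(r/4)^{-s-1} e^{-u/4}` for `u ≥ r`.
-/

open Real MeasureTheory Set

/-- The Gamma integrand after the substitution `t = x⁻¹` of `integral_comp_rpow_Ioi`. -/
lemma rpow_neg_one_sub_one_smul_comp_inv {s a x : ℝ} (hx : 0 < x) :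
    x ^ ((-1 : ℝ) - 1) • ((x ^ (-1 : ℝ)) ^ (s - 1) * exp (-(a * x ^ (-1 : ℝ)))) =
      x ^ (-s - 1) * exp (-(a / x)) := by
  rw [smul_eq_mul, ← rpow_mul hx.le, ← mul_assoc, ← rpow_add hx, rpow_neg_one, ← div_eq_mul_inv]
  ring_nf

lemma integrableOn_rpow_mul_exp_neg_div_Ioi {s a : ℝ} (hs : 0 < s) (ha : 0 < a) :
    IntegrableOn (fun u : ℝ => u ^ (-s - 1) * exp (-(a / u))) (Ioi 0) := by
  have hGamma : IntegrableOn (fun t : ℝ => t ^ (s - 1) * exp (-(a * t))) (Ioi 0) := by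
    simpa using integrableOn_rpow_mul_exp_neg_mul_rpow (p := 1) (by linarith) one_pos ha
  refine ((integrableOn_Ioi_comp_rpow_iff' _ (by norm_num : (-1 : ℝ) ≠ 0)).mpr hGamma).congr_fun
    (fun x hx => ?_) measurableSet_Ioi
  exact rpow_neg_one_sub_one_smul_comp_inv hx

lemma integral_rpow_mul_exp_neg_div_Ioi {s a : ℝ} (hs : 0 < s) (ha : 0 < a) :
    ∫ u in Ioi 0, u ^ (-s - 1) * exp (-(a / u)) = (1 / a) ^ s * Gamma s := by
  rw [← integral_rpow_mul_exp_neg_mul_Ioi hs ha,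
    ← integral_comp_rpow_Ioi (fun t => t ^ (s - 1) * exp (-(a * t))) (by norm_num : (-1 : ℝ) ≠ 0)]
  refine setIntegral_congr_fun measurableSet_Ioi (fun x hx => ?_)
  rw [abs_neg, abs_one, one_mul, rpow_neg_one_sub_one_smul_comp_inv hx]

lemma setIntegral_Ioi_exp_neg_mul_sq_sub_le {b : ℝ} (hb : 0 < b) (c : ℝ) :
    ∫ u in Ioi 0, exp (-b * (u - c) ^ 2) ≤ √(π / b) := by
  rw [← integral_gaussian b, ← integral_sub_right_eq_self (fun u => exp (-b * u ^ 2)) c]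
  exact setIntegral_le_integral ((integrable_exp_neg_mul_sq hb).comp_sub_right c)
    (ae_of_all _ fun u => (exp_pos _).le)

lemma integral_exp_neg_quarter_mul_Ioi : ∫ u in Ioi 0, exp (-(1 / 4) * u) = 4 := by
  rw [integral_exp_mul_Ioi (by norm_num)]
  norm_num

lemma exp_neg_mul_exp_neg_sq_div {u : ℝ} (hu : u ≠ 0) (r : ℝ) :
    exp (-u) * exp (-r ^ 2 / (4 * u)) = exp (-r) * exp (-((2 * u - r) ^ 2 / (4 * u))) := by
  rw [← exp_add, ← exp_add]
  congr 1
  field_simp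
  ring

lemma rpow_mul_exp_neg_sq_sub_div_le {s r u : ℝ} (hs : -1 ≤ s) (hr : 0 < r) (hu : 0 < u) :
    u ^ (-s - 1) * exp (-((2 * u - r) ^ 2 / (4 * u))) ≤
      u ^ (-s - 1) * exp (-(r ^ 2 / 16 / u)) +
        (r / 4) ^ (-s - 1) * (exp (-(1 / r) * (u - r / 2) ^ 2) + exp (-(1 / 4) * u)) := by
  have hpow : 0 ≤ u ^ (-s - 1) := rpow_nonneg hu.le _
  have hexp : ∀ t, 0 ≤ exp t := fun t => (exp_pos t).le
  rcases le_or_gt u (r / 4) with hsmall | hlarge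
  · have hexponent : r ^ 2 / 16 / u ≤ (2 * u - r) ^ 2 / (4 * u) := by
      rw [div_le_div_iff₀ hu (by positivity)]
      nlinarith [mul_nonneg (mul_nonneg hu.le (by linarith : (0 : ℝ) ≤ 3 * r / 2 - 2 * u))
        (by linarith : (0 : ℝ) ≤ r / 2 - 2 * u)]
    have := mul_le_mul_of_nonneg_left (exp_le_exp.mpr (neg_le_neg hexponent)) hpow
    have : 0 ≤ (r / 4) ^ (-s - 1) * (exp (-(1 / r) * (u - r / 2) ^ 2) + exp (-(1 / 4) * u)) :=
      mul_nonneg (rpow_nonneg (by positivity) _) (add_nonneg (hexp _) (hexp _))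
    linarith
  have hpow_le : u ^ (-s - 1) ≤ (r / 4) ^ (-s - 1) :=
    rpow_le_rpow_of_nonpos (by positivity) hlarge.le (by linarith)
  have hexp_le : exp (-((2 * u - r) ^ 2 / (4 * u))) ≤
      exp (-(1 / r) * (u - r / 2) ^ 2) + exp (-(1 / 4) * u) := by
    rw [neg_mul, neg_mul]
    rcases le_or_gt u r with hmid | hbig
    · have hexponent : (1 / r) * (u - r / 2) ^ 2 ≤ (2 * u - r) ^ 2 / (4 * u) := by
        rw [show (1 / r) * (u - r / 2) ^ 2 = (2 * u - r) ^ 2 / (4 * r) by field_simp; ring]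
        exact div_le_div_of_nonneg_left (sq_nonneg _) (by positivity) (by linarith)
      have := exp_le_exp.mpr (neg_le_neg hexponent)
      linarith [hexp (-(1 / 4 * u))]
    · have hexponent : (1 / 4) * u ≤ (2 * u - r) ^ 2 / (4 * u) := by
        rw [le_div_iff₀ (by positivity)]
        nlinarith
      have := exp_le_exp.mpr (neg_le_neg hexponent)
      linarith [hexp (-(1 / r * (u - r / 2) ^ 2))]
  nlinarith [mul_le_mul hpow_le hexp_le (hexp _) (rpow_nonneg (by positivity) (-s - 1)),
    mul_nonneg hpow (hexp (-(r ^ 2 / 16 / u)))]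

lemma integral_rpow_mul_exp_neg_sq_sub_div_le {s r : ℝ} (hs : 0 < s) (hr : 0 < r) :
    ∫ u in Ioi 0, u ^ (-s - 1) * exp (-((2 * u - r) ^ 2 / (4 * u))) ≤
      (1 / (r ^ 2 / 16)) ^ s * Gamma s + (r / 4) ^ (-s - 1) * (√(π / (1 / r)) + 4) := by
  have hsmall := integrableOn_rpow_mul_exp_neg_div_Ioi hs (by positivity : 0 < r ^ 2 / 16)
  have hgauss : IntegrableOn (fun u => exp (-(1 / r) * (u - r / 2) ^ 2)) (Ioi 0) :=
    ((integrable_exp_neg_mul_sq (by positivity : 0 < 1 / r)).comp_sub_right _).integrableOn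
  have hdecay : IntegrableOn (fun u => exp (-(1 / 4) * u)) (Ioi 0) := by
    simpa only [neg_mul] using exp_neg_integrableOn_Ioi 0 (by norm_num : (0 : ℝ) < 1 / 4)
  have hlarge : IntegrableOn (fun u => (r / 4) ^ (-s - 1) *
      (exp (-(1 / r) * (u - r / 2) ^ 2) + exp (-(1 / 4) * u))) (Ioi 0) :=
    (hgauss.add hdecay).const_mul _
  calc ∫ u in Ioi 0, u ^ (-s - 1) * exp (-((2 * u - r) ^ 2 / (4 * u)))
      ≤ ∫ u in Ioi 0, (u ^ (-s - 1) * exp (-(r ^ 2 / 16 / u)) +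
          (r / 4) ^ (-s - 1) * (exp (-(1 / r) * (u - r / 2) ^ 2) + exp (-(1 / 4) * u))) := by
        refine integral_mono_of_nonneg ?_ (hsmall.add hlarge) ?_ <;>
          refine ae_restrict_of_forall_mem measurableSet_Ioi fun u hu => ?_
        · exact mul_nonneg (rpow_nonneg (le_of_lt hu) _) (exp_pos _).le
        · exact rpow_mul_exp_neg_sq_sub_div_le (by linarith) hr hu
    _ ≤ (1 / (r ^ 2 / 16)) ^ s * Gamma s + (r / 4) ^ (-s - 1) * (√(π / (1 / r)) + 4) := by
        rw [integral_add hsmall hlarge, integral_const_mul,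
          integral_add hgauss hdecay, integral_rpow_mul_exp_neg_div_Ioi hs (by positivity),
          integral_exp_neg_quarter_mul_Ioi]
        gcongr
        exact setIntegral_Ioi_exp_neg_mul_sq_sub_le (by positivity) _

theorem exists_integral_rpow_mul_exp_neg_sq_sub_div_le_rpow {s : ℝ} (hs : 1 / 2 ≤ s) :
    ∃ C, 0 < C ∧ ∀ r, 1 ≤ r →
      ∫ u in Ioi 0, u ^ (-s - 1) * exp (-((2 * u - r) ^ 2 / (4 * u))) ≤ C * r ^ (-s - 1 / 2) := by
  refine ⟨16 ^ s * Gamma s + 4 ^ (s + 1) * (√π + 4), by positivity, fun r hr => ?_⟩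
  have hr0 : 0 < r := by linarith
  have hsmall : (1 / (r ^ 2 / 16)) ^ s = 16 ^ s * r ^ (-2 * s) := by
    rw [one_div_div, div_rpow (by norm_num) (by positivity), ← rpow_natCast, ← rpow_mul hr0.le,
      neg_mul, rpow_neg hr0.le, div_eq_mul_inv]
    norm_num
  have hlarge : (r / 4) ^ (-s - 1) = 4 ^ (s + 1) * r ^ (-s - 1) := by
    rw [div_rpow hr0.le (by norm_num), show -s - 1 = -(s + 1) by ring, rpow_neg (by norm_num : (0 : ℝ) ≤ 4),
      div_inv_eq_mul, mul_comm]
  have hsqrt : √(π / (1 / r)) = √π * r ^ (1 / 2 : ℝ) := by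
    rw [div_div_eq_mul_div, div_one, sqrt_mul pi_pos.le, sqrt_eq_rpow r]
  have hpow_half : r ^ (-s - 1) * r ^ (1 / 2 : ℝ) = r ^ (-s - 1 / 2) := by
    rw [← rpow_add hr0]
    ring_nf
  have hpow_gamma : r ^ (-2 * s) ≤ r ^ (-s - 1 / 2) := rpow_le_rpow_of_exponent_le hr (by linarith)
  have hpow_decay : r ^ (-s - 1) ≤ r ^ (-s - 1 / 2) := rpow_le_rpow_of_exponent_le hr (by linarith)
  calc _ ≤ _ := integral_rpow_mul_exp_neg_sq_sub_div_le (by linarith) hr0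
    _ = 16 ^ s * Gamma s * r ^ (-2 * s) +
          4 ^ (s + 1) * (√π * r ^ (-s - 1 / 2) + 4 * r ^ (-s - 1)) := by
        rw [hsmall, hlarge, hsqrt, ← hpow_half]
        ring
    _ ≤ 16 ^ s * Gamma s * r ^ (-s - 1 / 2) +
          4 ^ (s + 1) * (√π * r ^ (-s - 1 / 2) + 4 * r ^ (-s - 1 / 2)) := by
        gcongr
    _ = (16 ^ s * Gamma s + 4 ^ (s + 1) * (√π + 4)) * r ^ (-s - 1 / 2) := by ring

theorem stmt9 (n : ℕ) (hn : 0 < n) :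
    ∃ C : ℝ, 0 < C ∧ ∀ x y : EuclideanSpace ℝ (Fin n), ‖x - y‖ > 1 →
      (∫ u in Set.Ioi (0:ℝ),
          (4 * π * u) ^ (-(n : ℝ) / 2) * Real.exp (-x ⟨0, hn⟩ - y ⟨0, hn⟩) *
            Real.exp (-u) * Real.exp (-‖x - y‖ ^ 2 / (4 * u)) / u) ≤
        C * Real.exp (-x ⟨0, hn⟩ - y ⟨0, hn⟩ - ‖x - y‖) * ‖x - y‖ ^ (-((n : ℝ) + 1) / 2) := by
  set s : ℝ := n / 2
  have hs : 1 / 2 ≤ s := by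
    have : (1 : ℝ) ≤ n := by exact_mod_cast hn
    simp only [s]
    linarith
  obtain ⟨C, hC, hbound⟩ := exists_integral_rpow_mul_exp_neg_sq_sub_div_le_rpow hs
  refine ⟨(4 * π) ^ (-s) * C, by positivity, fun x y hxy => ?_⟩
  set r := ‖x - y‖
  set E := exp (-x ⟨0, hn⟩ - y ⟨0, hn⟩)
  have hintegrand : ∀ u ∈ Ioi (0 : ℝ),
      (4 * π * u) ^ (-(n : ℝ) / 2) * E * exp (-u) * exp (-r ^ 2 / (4 * u)) / u =
        (4 * π) ^ (-s) * E * exp (-r) * (u ^ (-s - 1) * exp (-((2 * u - r) ^ 2 / (4 * u)))) := by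
    intro u hu
    rw [neg_div, mul_rpow (by positivity) (le_of_lt hu), rpow_sub hu, rpow_one]
    rw [mul_assoc _ (exp (-u)), exp_neg_mul_exp_neg_sq_div hu.ne']
    ring
  rw [setIntegral_congr_fun measurableSet_Ioi hintegrand, integral_const_mul,
    show -((n : ℝ) + 1) / 2 = -s - 1 / 2 by ring, sub_eq_add_neg _ r, exp_add]
  calc _ ≤ (4 * π) ^ (-s) * E * exp (-r) * (C * r ^ (-s - 1 / 2)) := by
        gcongr
        exact hbound r hxy.le
    _ = _ := by ring
end

section
/- Let n ≥ 2 and define for m ∈ ℤ^{n−1} and i ∈ ℤ the unit cubes Q_{i,m} = (i−1, i] × ∏_{ν}(m_ν − 1, m_ν]. Define the family of forbidden cubes F_{i,m} = {Q_{i',m'} : i' < i, |m − m'| < 4√(i − i') + 4√(n−1)} and the set D_{i,m} = ⋃_{x' ∈ Q_m} {(y₁, y') : y₁ < i − 1, |y' − x'| < √(i − y₁) + √(n−1)}. Then D_{i,m} ⊆ ⋃_{Q ∈ F_{i,m}} Q. -/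
/-!
Given `(y₁, y') ∈ D_{i,m}`, the cube containing it is `Q_{⌈y₁⌉, ⌈y'⌉}`, and it is forbidden.
Coordinatewise, `m_ν - ⌈y'_ν⌉` differs from `x'_ν - y'_ν` by less than `1`, so
`|m - ⌈y'⌉| ≤ |y' - x'| + √(n-1)`; and `y₁ > ⌈y₁⌉ - 1` with `⌈y₁⌉ ≤ i - 1` gives
`i - y₁ ≤ 4 (i - ⌈y₁⌉)`, i.e. `√(i - y₁) ≤ 2 √(i - ⌈y₁⌉)`.
-/

open Real Finset

lemma EuclideanSpace.norm_le_sqrt_card {ι : Type*} [Fintype ι] (v : EuclideanSpace ℝ ι)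
    (hv : ∀ ν, |v ν| ≤ 1) : ‖v‖ ≤ √(Fintype.card ι) := by
  rw [EuclideanSpace.norm_eq]
  gcongr
  calc ∑ ν, ‖v ν‖ ^ 2 ≤ ∑ _ν : ι, (1 : ℝ) := by
        gcongr with ν
        rw [Real.norm_eq_abs, sq_abs]
        exact (sq_le_one_iff_abs_le_one _).mpr (hv ν)
    _ = Fintype.card ι := by simp

lemma sqrt_sum_sub_ceil_sq_le {ι : Type*} [Fintype ι] (m : ι → ℤ) (x y : EuclideanSpace ℝ ι)
    (hx : ∀ ν, (m ν : ℝ) - 1 < x ν ∧ x ν ≤ m ν) :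
    √(∑ ν, ((m ν : ℝ) - ⌈y ν⌉) ^ 2) ≤ ‖y - x‖ + √(Fintype.card ι) := by
  set e : EuclideanSpace ℝ ι := WithLp.toLp 2 fun ν => (m ν - x ν) - (⌈y ν⌉ - y ν)
  have he : ∀ ν, |e ν| ≤ 1 := fun ν => by
    have hy := Int.ceil_eq_iff.mp (rfl : ⌈y ν⌉ = _)
    have hxν := hx ν
    simp only [e, abs_le]
    constructor <;> linarith
  calc √(∑ ν, ((m ν : ℝ) - ⌈y ν⌉) ^ 2) = ‖(x - y) + e‖ := by
        rw [EuclideanSpace.norm_eq]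
        congr 1
        refine Finset.sum_congr rfl fun ν _ => ?_
        simp only [e, PiLp.add_apply, PiLp.sub_apply, Real.norm_eq_abs, sq_abs]
        ring
    _ ≤ ‖x - y‖ + ‖e‖ := norm_add_le _ _
    _ ≤ ‖y - x‖ + √(Fintype.card ι) := by
        rw [norm_sub_rev]
        gcongr
        exact EuclideanSpace.norm_le_sqrt_card e he

lemma Real.sqrt_sub_le_two_mul_sqrt_sub {s t c : ℝ} (hc : c - 1 < t) (hs : c + 1 ≤ s) :
    √(s - t) ≤ 2 * √(s - c) := by
  rw [Real.sqrt_le_iff, mul_pow, Real.sq_sqrt (by linarith)]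
  exact ⟨by positivity, by linarith⟩

theorem stmt12_general (d : ℕ) (i : ℤ) (m : Fin d → ℤ) :
    (⋃ x' ∈ {x' : EuclideanSpace ℝ (Fin d) | ∀ ν, (m ν : ℝ) - 1 < x' ν ∧ x' ν ≤ m ν},
        {p : ℝ × EuclideanSpace ℝ (Fin d) |
          p.1 < (i : ℝ) - 1 ∧ ‖p.2 - x'‖ < Real.sqrt ((i : ℝ) - p.1) + Real.sqrt d}) ⊆
      ⋃ (i' : ℤ) (_ : i' < i) (m' : Fin d → ℤ)
        (_ : Real.sqrt (∑ ν, ((m ν : ℝ) - m' ν) ^ 2) <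
              4 * Real.sqrt ((i : ℝ) - i') + 4 * Real.sqrt d),
        {p : ℝ × EuclideanSpace ℝ (Fin d) |
          ((i' : ℝ) - 1 < p.1 ∧ p.1 ≤ (i' : ℝ)) ∧
            ∀ ν, (m' ν : ℝ) - 1 < p.2 ν ∧ p.2 ν ≤ m' ν} := by
  rintro ⟨y₁, y'⟩ hp
  simp only [Set.mem_iUnion, Set.mem_ofPred_eq] at hp ⊢
  obtain ⟨x', hx', hy₁, hy'⟩ := hp
  have hceil := Int.ceil_eq_iff.mp (rfl : ⌈y₁⌉ = _)
  have hlt : ⌈y₁⌉ + 1 ≤ i := by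
    have : ⌈y₁⌉ ≤ i - 1 := Int.ceil_le.mpr (by push_cast; linarith)
    omega
  refine ⟨⌈y₁⌉, by omega, fun ν => ⌈y' ν⌉, ?_, hceil, fun ν => Int.ceil_eq_iff.mp rfl⟩
  have htime := Real.sqrt_sub_le_two_mul_sqrt_sub (s := i) hceil.1 (by exact_mod_cast hlt)
  have hspace := sqrt_sum_sub_ceil_sq_le m x' y' hx'
  rw [Fintype.card_fin] at hspace
  have := Real.sqrt_nonneg ((i : ℝ) - ⌈y₁⌉)
  have := Real.sqrt_nonneg (d : ℝ)
  linarith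

theorem stmt12 (d : ℕ) (hd : 0 < d) (i : ℤ) (m : Fin d → ℤ) :
    (⋃ x' ∈ {x' : EuclideanSpace ℝ (Fin d) | ∀ ν, (m ν : ℝ) - 1 < x' ν ∧ x' ν ≤ m ν},
        {p : ℝ × EuclideanSpace ℝ (Fin d) |
          p.1 < (i : ℝ) - 1 ∧ ‖p.2 - x'‖ < Real.sqrt ((i : ℝ) - p.1) + Real.sqrt d}) ⊆
      ⋃ (i' : ℤ) (_ : i' < i) (m' : Fin d → ℤ)
        (_ : Real.sqrt (∑ ν, ((m ν : ℝ) - m' ν) ^ 2) <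
              4 * Real.sqrt ((i : ℝ) - i') + 4 * Real.sqrt d),
        {p : ℝ × EuclideanSpace ℝ (Fin d) |
          ((i' : ℝ) - 1 < p.1 ∧ p.1 ≤ (i' : ℝ)) ∧
            ∀ ν, (m' ν : ℝ) - 1 < p.2 ν ∧ p.2 ν ≤ m' ν} :=
  stmt12_general d i m
end

section
/- Let n ≥ 2. There is a constant C = C(n) such that for all i ∈ ℤ and m ∈ ℤ^{n−1}, the set D̂_{i,m} = ⋃{Q_{i',m'} : i' < i, |m − m'| < 4√(i − i') + 4√(n−1)} satisfies μ(D̂_{i,m}) ≤ C μ(Q_{i,m}), where μ has density e^{2y₁} with respect to Lebesgue measure on ℝⁿ. -/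
open Real MeasureTheory Finset
open scoped ENNReal NNReal

lemma cube_eq (d : ℕ) (a b : Fin d → ℝ) :
    {y : EuclideanSpace ℝ (Fin d) | ∀ ν, a ν < y ν ∧ y ν ≤ b ν}
      = (MeasurableEquiv.toLp 2 (Fin d → ℝ)).symm ⁻¹' (Set.univ.pi fun ν => Set.Ioc (a ν) (b ν)) := by
  ext y
  simp [MeasurableEquiv.toLp, Set.mem_pi, Set.mem_Ioc]
  rfl

lemma cube_meas (d : ℕ) (a b : Fin d → ℝ) :
    MeasurableSet {y : EuclideanSpace ℝ (Fin d) | ∀ ν, a ν < y ν ∧ y ν ≤ b ν} := by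
  rw [cube_eq]
  exact (MeasurableEquiv.toLp 2 (Fin d → ℝ)).symm.measurable
    (MeasurableSet.univ_pi fun ν => measurableSet_Ioc)

lemma cube_vol (d : ℕ) (a b : Fin d → ℝ) :
    (volume : Measure (EuclideanSpace ℝ (Fin d)))
        {y | ∀ ν, a ν < y ν ∧ y ν ≤ b ν} = ∏ ν, ENNReal.ofReal (b ν - a ν) := by
  rw [cube_eq]
  rw [(EuclideanSpace.volume_preserving_symm_measurableEquiv_toLp (Fin d)).measure_preimage
    (MeasurableSet.univ_pi fun ν => measurableSet_Ioc).nullMeasurableSet]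
  rw [volume_pi_pi]
  simp [Real.volume_Ioc]

lemma prod_wd_apply (d : ℕ) (g : ℝ → ℝ≥0∞) (hg : Measurable g)
    (s : Set ℝ) (hs : MeasurableSet s)
    (T : Set (EuclideanSpace ℝ (Fin d))) (hT : MeasurableSet T) :
    (volume : Measure (ℝ × EuclideanSpace ℝ (Fin d))).withDensity (fun p => g p.1) (s ×ˢ T)
      = (∫⁻ x in s, g x) * volume T := by
  rw [withDensity_apply _ (hs.prod hT), Measure.volume_eq_prod, ← Measure.prod_restrict]
  calc ∫⁻ p, g p.1 ∂((volume.restrict s).prod (volume.restrict T))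
      = ∫⁻ p : ℝ × EuclideanSpace ℝ (Fin d), g p.1 * (fun _ => (1:ℝ≥0∞)) p.2
          ∂((volume.restrict s).prod (volume.restrict T)) := by simp
    _ = (∫⁻ x, g x ∂volume.restrict s) * ∫⁻ _, (1:ℝ≥0∞) ∂volume.restrict T :=
        lintegral_prod_mul hg.aemeasurable aemeasurable_const
    _ = (∫⁻ x in s, g x) * volume T := by simp

theorem stmt13 (d : ℕ) (hd : 0 < d) :
    ∃ C : ℝ, 0 < C ∧ ∀ (i : ℤ) (m : Fin d → ℤ),
      (volume : Measure (ℝ × EuclideanSpace ℝ (Fin d))).withDensity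
          (fun p => ENNReal.ofReal (Real.exp (2 * p.1)))
        (⋃ (i' : ℤ) (_ : i' < i) (m' : Fin d → ℤ)
            (_ : Real.sqrt (∑ ν, ((m ν : ℝ) - m' ν) ^ 2) <
                  4 * Real.sqrt ((i : ℝ) - i') + 4 * Real.sqrt d),
            {p : ℝ × EuclideanSpace ℝ (Fin d) |
              ((i' : ℝ) - 1 < p.1 ∧ p.1 ≤ (i' : ℝ)) ∧
                ∀ ν, (m' ν : ℝ) - 1 < p.2 ν ∧ p.2 ν ≤ m' ν}) ≤
      ENNReal.ofReal C *
        (volume : Measure (ℝ × EuclideanSpace ℝ (Fin d))).withDensity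
            (fun p => ENNReal.ofReal (Real.exp (2 * p.1)))
          {p : ℝ × EuclideanSpace ℝ (Fin d) |
            ((i : ℝ) - 1 < p.1 ∧ p.1 ≤ (i : ℝ)) ∧
              ∀ ν, (m ν : ℝ) - 1 < p.2 ν ∧ p.2 ν ≤ m ν} := by
  have hr0 : (0:ℝ) < Real.exp (-2) := Real.exp_pos _
  have hr1 : Real.exp (-2) < 1 := Real.exp_lt_one_iff.mpr (by norm_num)
  set b : ℝ := 9 + 8 * Real.sqrt d with hbdef
  have hsd : (0:ℝ) ≤ Real.sqrt d := Real.sqrt_nonneg _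
  have hb0 : (0:ℝ) < b := by positivity
  have hsum0 : Summable (fun k : ℕ => ((k:ℝ))^d * Real.exp (-2)^k) :=
    summable_pow_mul_geometric_of_norm_lt_one d
      (by rwa [Real.norm_eq_abs, abs_of_pos hr0])
  have hsum1 : Summable (fun k : ℕ => ((k:ℝ)+1)^d * Real.exp (-2)^k) := by
    have h2 := hsum0.comp_injective (add_left_injective 1)
    have h3 := h2.mul_left (Real.exp (-2))⁻¹
    refine h3.congr fun k => ?_
    simp only [Function.comp_apply]
    push_cast
    rw [pow_succ]
    field_simp
  set g : ℕ → ℝ := fun k => (b * ((k:ℝ)+1))^d * Real.exp (-2)^k with hgdef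
  have hgsum : Summable g := by
    refine ((hsum1.mul_left (b^d)).congr fun k => ?_)
    simp only [hgdef, mul_pow]
    ring
  have hg0 : ∀ k, 0 ≤ g k := fun k => by positivity
  have hS0 : (0:ℝ) ≤ ∑' k, g k := tsum_nonneg hg0
  refine ⟨1 + ∑' k, g k, by linarith, fun i m => ?_⟩
  set gd : ℝ → ℝ≥0∞ := fun x => ENNReal.ofReal (Real.exp (2 * x)) with hgd
  have hgdm : Measurable gd := by
    apply Measurable.ennreal_ofReal
    fun_prop
  set R : ℕ → ℝ := fun k => 4 * Real.sqrt ((k:ℝ)+1) + 4 * Real.sqrt d with hRdef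
  have hR0 : ∀ k, (0:ℝ) ≤ R k := fun k => by positivity
  set Slab : ℕ → Set (ℝ × EuclideanSpace ℝ (Fin d)) := fun k =>
    (Set.Ioc ((i:ℝ)-1-k-1) ((i:ℝ)-1-k)) ×ˢ
      {y : EuclideanSpace ℝ (Fin d) | ∀ ν, (m ν:ℝ) - 1 - R k < y ν ∧ y ν ≤ (m ν:ℝ) + R k}
    with hSlabdef
  -- inclusion
  have hsub : (⋃ (i' : ℤ) (_ : i' < i) (m' : Fin d → ℤ)
            (_ : Real.sqrt (∑ ν, ((m ν : ℝ) - m' ν) ^ 2) <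
                  4 * Real.sqrt ((i : ℝ) - i') + 4 * Real.sqrt d),
            {p : ℝ × EuclideanSpace ℝ (Fin d) |
              ((i' : ℝ) - 1 < p.1 ∧ p.1 ≤ (i' : ℝ)) ∧
                ∀ ν, (m' ν : ℝ) - 1 < p.2 ν ∧ p.2 ν ≤ m' ν}) ⊆ ⋃ k, Slab k := by
    intro p hp
    simp only [Set.mem_iUnion, Set.mem_setOf_eq] at hp
    obtain ⟨i', hi', m', hm', hp1, hp2⟩ := hp
    set k : ℕ := (i - 1 - i').toNat with hkdef
    have hk : ((i - 1 - i').toNat : ℤ) = i - 1 - i' := Int.toNat_of_nonneg (by omega)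
    have hkR : (i:ℝ) - 1 - (k:ℝ) = (i' : ℝ) := by
      have := congrArg (fun z : ℤ => (z : ℝ)) hk
      push_cast at this
      rw [hkdef]
      linarith
    have hii' : (i:ℝ) - (i':ℝ) = (k:ℝ) + 1 := by linarith
    have habs : ∀ ν, |(m ν:ℝ) - m' ν| < R k := by
      intro ν
      have h1 : ((m ν:ℝ) - m' ν)^2 ≤ ∑ ν', ((m ν':ℝ) - m' ν')^2 :=
        Finset.single_le_sum (f := fun ν' => ((m ν':ℝ) - m' ν')^2)
          (fun _ _ => sq_nonneg _) (Finset.mem_univ ν)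
      have h2 : |(m ν:ℝ) - m' ν| ≤ Real.sqrt (∑ ν', ((m ν':ℝ) - m' ν')^2) := by
        rw [← Real.sqrt_sq_eq_abs]
        exact Real.sqrt_le_sqrt h1
      have h3 : Real.sqrt (∑ ν', ((m ν':ℝ) - m' ν')^2) < R k := by
        rw [hRdef]
        calc Real.sqrt (∑ ν', ((m ν':ℝ) - m' ν')^2)
            < 4 * Real.sqrt ((i:ℝ) - i') + 4 * Real.sqrt d := hm'
          _ = 4 * Real.sqrt ((k:ℝ)+1) + 4 * Real.sqrt d := by rw [hii']
      linarith [h2, h3]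
    refine Set.mem_iUnion.mpr ⟨k, ?_⟩
    rw [hSlabdef]
    refine Set.mem_prod.mpr ⟨Set.mem_Ioc.mpr ⟨?_, ?_⟩, ?_⟩
    · linarith [hp1.1]
    · linarith [hp1.2]
    · intro ν
      have h4 := habs ν
      rw [abs_lt] at h4
      have h5 := hp2 ν
      exact ⟨by linarith [h4.2, h5.1], by linarith [h4.1, h5.2]⟩
  -- per slab bound
  have hSlabM : ∀ k, (volume : Measure (ℝ × EuclideanSpace ℝ (Fin d))).withDensity
      (fun p => gd p.1) (Slab k)
      ≤ ENNReal.ofReal (Real.exp (2*((i:ℝ)-1))) * ENNReal.ofReal (g k) := by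
    intro k
    rw [hSlabdef]
    rw [prod_wd_apply d gd hgdm _ measurableSet_Ioc _ (cube_meas d _ _), cube_vol]
    have hprod : (∏ ν : Fin d, ENNReal.ofReal (((m ν:ℝ) + R k) - ((m ν:ℝ) - 1 - R k)))
        = ENNReal.ofReal ((2 * R k + 1)^d) := by
      have h1 : ∀ ν : Fin d, ENNReal.ofReal (((m ν:ℝ) + R k) - ((m ν:ℝ) - 1 - R k))
          = ENNReal.ofReal (2 * R k + 1) := fun ν => by ring_nf
      rw [Finset.prod_congr rfl (fun ν _ => h1 ν), Finset.prod_const, Finset.card_univ,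
        Fintype.card_fin, ← ENNReal.ofReal_pow (by positivity)]
    rw [hprod]
    have hint : (∫⁻ x in Set.Ioc ((i:ℝ)-1-(k:ℝ)-1) ((i:ℝ)-1-(k:ℝ)), gd x)
        ≤ ENNReal.ofReal (Real.exp (2*((i:ℝ)-1-(k:ℝ)))) := by
      calc (∫⁻ x in Set.Ioc ((i:ℝ)-1-(k:ℝ)-1) ((i:ℝ)-1-(k:ℝ)), gd x)
          ≤ ∫⁻ _ in Set.Ioc ((i:ℝ)-1-(k:ℝ)-1) ((i:ℝ)-1-(k:ℝ)),
              ENNReal.ofReal (Real.exp (2*((i:ℝ)-1-(k:ℝ)))) :=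
            setLIntegral_mono measurable_const (fun x hx => by
              rw [hgd]
              exact ENNReal.ofReal_le_ofReal (Real.exp_le_exp.mpr (by linarith [hx.2])))
        _ = ENNReal.ofReal (Real.exp (2*((i:ℝ)-1-(k:ℝ)))) *
              volume (Set.Ioc ((i:ℝ)-1-(k:ℝ)-1) ((i:ℝ)-1-(k:ℝ))) := setLIntegral_const _ _
        _ = ENNReal.ofReal (Real.exp (2*((i:ℝ)-1-(k:ℝ)))) := by
            rw [Real.volume_Ioc]
            norm_num
    refine le_trans (mul_le_mul' hint le_rfl) ?_
    rw [← ENNReal.ofReal_mul (by positivity), ← ENNReal.ofReal_mul (by positivity)]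
    apply ENNReal.ofReal_le_ofReal
    have hexp : Real.exp (2*((i:ℝ)-1-(k:ℝ))) = Real.exp (2*((i:ℝ)-1)) * Real.exp (-2)^k := by
      rw [← Real.exp_nat_mul, ← Real.exp_add]
      ring_nf
    have hk0 : (0:ℝ) ≤ (k:ℝ) := Nat.cast_nonneg _
    have hsq : Real.sqrt ((k:ℝ)+1) ≤ (k:ℝ)+1 := by
      have h := Real.sqrt_le_sqrt (show (k:ℝ)+1 ≤ ((k:ℝ)+1)^2 by nlinarith)
      rwa [Real.sqrt_sq (by positivity)] at h
    have hRb : 2 * R k + 1 ≤ b * ((k:ℝ)+1) := by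
      simp only [hRdef, hbdef]
      nlinarith [mul_nonneg hsd hk0, hsq, hk0, hsd]
    have hpow : (2 * R k + 1)^d ≤ (b * ((k:ℝ)+1))^d :=
      pow_le_pow_left₀ (by positivity) hRb d
    have he0 : (0:ℝ) ≤ Real.exp (-2)^k := by positivity
    calc Real.exp (2*((i:ℝ)-1-(k:ℝ))) * (2 * R k + 1)^d
        = Real.exp (2*((i:ℝ)-1)) * Real.exp (-2)^k * (2 * R k + 1)^d := by rw [hexp]
      _ ≤ Real.exp (2*((i:ℝ)-1)) * Real.exp (-2)^k * (b * ((k:ℝ)+1))^d :=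
          mul_le_mul_of_nonneg_left hpow (by positivity)
      _ = Real.exp (2*((i:ℝ)-1)) * g k := by simp only [hgdef]; ring
  -- lower bound on Q
  have hQeq : {p : ℝ × EuclideanSpace ℝ (Fin d) |
      ((i:ℝ) - 1 < p.1 ∧ p.1 ≤ (i:ℝ)) ∧ ∀ ν, (m ν:ℝ) - 1 < p.2 ν ∧ p.2 ν ≤ (m ν:ℝ)}
      = (Set.Ioc ((i:ℝ)-1) (i:ℝ)) ×ˢ
        {y : EuclideanSpace ℝ (Fin d) | ∀ ν, (m ν:ℝ) - 1 < y ν ∧ y ν ≤ (m ν:ℝ)} := rfl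
  have hQ : ENNReal.ofReal (Real.exp (2*((i:ℝ)-1)))
      ≤ (volume : Measure (ℝ × EuclideanSpace ℝ (Fin d))).withDensity (fun p => gd p.1)
        {p : ℝ × EuclideanSpace ℝ (Fin d) |
          ((i:ℝ) - 1 < p.1 ∧ p.1 ≤ (i:ℝ)) ∧ ∀ ν, (m ν:ℝ) - 1 < p.2 ν ∧ p.2 ν ≤ (m ν:ℝ)} := by
    rw [hQeq, prod_wd_apply d gd hgdm _ measurableSet_Ioc _ (cube_meas d _ _), cube_vol]
    have h1 : (∏ ν : Fin d, ENNReal.ofReal ((m ν:ℝ) - ((m ν:ℝ) - 1))) = 1 := by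
      simp
    rw [h1, mul_one]
    calc ENNReal.ofReal (Real.exp (2*((i:ℝ)-1)))
        = ENNReal.ofReal (Real.exp (2*((i:ℝ)-1))) * volume (Set.Ioc ((i:ℝ)-1) (i:ℝ)) := by
          rw [Real.volume_Ioc]
          norm_num
      _ = ∫⁻ _ in Set.Ioc ((i:ℝ)-1) (i:ℝ), ENNReal.ofReal (Real.exp (2*((i:ℝ)-1))) :=
          (setLIntegral_const _ _).symm
      _ ≤ ∫⁻ x in Set.Ioc ((i:ℝ)-1) (i:ℝ), gd x :=
          setLIntegral_mono hgdm (fun x hx => by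
            rw [hgd]
            exact ENNReal.ofReal_le_ofReal (Real.exp_le_exp.mpr (by linarith [hx.1])))
  -- put together
  refine le_trans (measure_mono hsub) ?_
  refine le_trans (measure_iUnion_le _) ?_
  refine le_trans (ENNReal.tsum_le_tsum hSlabM) ?_
  rw [ENNReal.tsum_mul_left, ← ENNReal.ofReal_tsum_of_nonneg hg0 hgsum]
  refine le_trans ?_ (mul_le_mul' le_rfl hQ)
  rw [mul_comm]
  exact mul_le_mul' (ENNReal.ofReal_le_ofReal (by linarith)) le_rfl
end

section
/- Let n ≥ 2 and let T be the operator Tg(x) = e^{−2x₁} ∫_{y₁ < x₁ − 1, |x' − y'| < √(x₁ − y₁)} (x₁ − y₁)^{(1−n)/2} g(y) dy. Suppose i ≤ 0, m ∈ ℤ^{n−1}, and there exists z in the unit cube Q_{i,m} = (i−1, i] × ∏_ν(m_ν − 1, m_ν] with Tg(z) > λ for some g ≥ 0 and λ > 0. Then for every x' in the cube Q_m ⊂ ℝ^{n−1}, T̃g(i, x') > e^{−2} 2^{−(n−1)/2} λ, where T̃g(i, x') = e^{−2i} ∫_{y₁ < i−1, |y' − x'| < √(i − y₁) + √(n−1)}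 (i − y₁)^{(1−n)/2} g(y) dy. -/
open Real MeasureTheory Set

theorem stmt15 (d : ℕ) (hd : 0 < d)
    (g : ℝ × EuclideanSpace ℝ (Fin d) → ℝ) (hg : Integrable g) (hg0 : ∀ p, 0 ≤ g p)
    (i : ℤ) (hi : i ≤ 0) (m : Fin d → ℤ) (lam : ℝ) (hlam : 0 < lam)
    (z : ℝ × EuclideanSpace ℝ (Fin d))
    (hz1 : (i : ℝ) - 1 < z.1) (hz2 : z.1 ≤ (i : ℝ))
    (hz3 : ∀ ν, (m ν : ℝ) - 1 < z.2 ν ∧ z.2 ν ≤ m ν)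
    (hT : lam < Real.exp (-2 * z.1) *
      ∫ y in {y : ℝ × EuclideanSpace ℝ (Fin d) |
          y.1 < z.1 - 1 ∧ ‖z.2 - y.2‖ < Real.sqrt (z.1 - y.1)},
        (z.1 - y.1) ^ ((1 - ((d : ℝ) + 1)) / 2) * g y) :
    ∀ x' : EuclideanSpace ℝ (Fin d), (∀ ν, (m ν : ℝ) - 1 < x' ν ∧ x' ν ≤ m ν) →
      Real.exp (-2) * 2 ^ (-(d : ℝ) / 2) * lam <
        Real.exp (-2 * (i : ℝ)) *
          ∫ y in {y : ℝ × EuclideanSpace ℝ (Fin d) |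
              y.1 < (i : ℝ) - 1 ∧ ‖y.2 - x'‖ < Real.sqrt ((i : ℝ) - y.1) + Real.sqrt d},
            ((i : ℝ) - y.1) ^ ((1 - ((d : ℝ) + 1)) / 2) * g y := by
  intro x' hx'
  set e : ℝ := (1 - ((d : ℝ) + 1)) / 2 with he
  have he' : e = -(d : ℝ) / 2 := by rw [he]; ring
  have hele : e ≤ 0 := by
    rw [he']
    have : (0:ℝ) ≤ (d:ℝ) := Nat.cast_nonneg d
    linarith
  set S : Set (ℝ × EuclideanSpace ℝ (Fin d)) :=
    {y | y.1 < z.1 - 1 ∧ ‖z.2 - y.2‖ < Real.sqrt (z.1 - y.1)} with hSdef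
  set S' : Set (ℝ × EuclideanSpace ℝ (Fin d)) :=
    {y | y.1 < (i : ℝ) - 1 ∧ ‖y.2 - x'‖ < Real.sqrt ((i : ℝ) - y.1) + Real.sqrt d} with hS'def
  -- measurability of the sets
  have hSm : MeasurableSet S := by
    have h1 : IsOpen {y : ℝ × EuclideanSpace ℝ (Fin d) | y.1 < z.1 - 1} :=
      isOpen_lt continuous_fst continuous_const
    have h2 : IsOpen {y : ℝ × EuclideanSpace ℝ (Fin d) | ‖z.2 - y.2‖ < Real.sqrt (z.1 - y.1)} :=
      isOpen_lt (continuous_const.sub continuous_snd).norm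
        (Real.continuous_sqrt.comp (continuous_const.sub continuous_fst))
    exact (h1.inter h2).measurableSet
  have hS'm : MeasurableSet S' := by
    have h1 : IsOpen {y : ℝ × EuclideanSpace ℝ (Fin d) | y.1 < (i : ℝ) - 1} :=
      isOpen_lt continuous_fst continuous_const
    have h2 : IsOpen {y : ℝ × EuclideanSpace ℝ (Fin d) |
        ‖y.2 - x'‖ < Real.sqrt ((i : ℝ) - y.1) + Real.sqrt d} :=
      isOpen_lt (continuous_snd.sub continuous_const).norm
        ((Real.continuous_sqrt.comp (continuous_const.sub continuous_fst)).add continuous_const)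
    exact (h1.inter h2).measurableSet
  -- distance between z.2 and x'
  have hzx : ‖z.2 - x'‖ < Real.sqrt d := by
    have hterm : ∀ ν : Fin d, ‖(z.2 - x') ν‖ ^ 2 < 1 := by
      intro ν
      have h1 := hz3 ν
      have h2 := hx' ν
      have hvu : (z.2 - x') ν = z.2 ν - x' ν := rfl
      rw [hvu, Real.norm_eq_abs, sq_abs]
      nlinarith [h1.1, h1.2, h2.1, h2.2]
    have hsum : (∑ ν : Fin d, ‖(z.2 - x') ν‖ ^ 2) < (d : ℝ) := by
      calc (∑ ν : Fin d, ‖(z.2 - x') ν‖ ^ 2) < ∑ _ν : Fin d, (1:ℝ) := by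
            apply Finset.sum_lt_sum_of_nonempty
            · exact Finset.univ_nonempty_iff.mpr (Fin.pos_iff_nonempty.mp hd)
            · intro ν _; exact hterm ν
        _ = (d : ℝ) := by simp
    have h0 : 0 ≤ ∑ ν : Fin d, ‖(z.2 - x') ν‖ ^ 2 :=
      Finset.sum_nonneg fun ν _ => sq_nonneg _
    rw [EuclideanSpace.norm_eq]
    exact Real.sqrt_lt_sqrt h0 hsum
  -- the subset relation
  have hSS' : S ⊆ S' := by
    rintro y ⟨hy1, hy2⟩
    have hy1' : y.1 < z.1 - 1 := hy1
    constructor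
    · show y.1 < (i : ℝ) - 1
      linarith
    · show ‖y.2 - x'‖ < Real.sqrt ((i : ℝ) - y.1) + Real.sqrt d
      have h1 : ‖y.2 - x'‖ ≤ ‖z.2 - y.2‖ + ‖z.2 - x'‖ := by
        have hrw : y.2 - x' = -(z.2 - y.2) + (z.2 - x') := by abel
        rw [hrw]
        calc ‖-(z.2 - y.2) + (z.2 - x')‖ ≤ ‖-(z.2 - y.2)‖ + ‖z.2 - x'‖ := norm_add_le _ _
          _ = ‖z.2 - y.2‖ + ‖z.2 - x'‖ := by rw [norm_neg]
      have h2 : Real.sqrt (z.1 - y.1) ≤ Real.sqrt ((i : ℝ) - y.1) :=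
        Real.sqrt_le_sqrt (by linarith)
      have hy2' : ‖z.2 - y.2‖ < Real.sqrt (z.1 - y.1) := hy2
      linarith
  -- integrability of the target integrand on S'
  have hms : Measurable fun y : ℝ × EuclideanSpace ℝ (Fin d) => ((i : ℝ) - y.1) ^ e := by
    fun_prop
  have hmsz : Measurable fun y : ℝ × EuclideanSpace ℝ (Fin d) => (z.1 - y.1) ^ e := by
    fun_prop
  have hint' : IntegrableOn (fun y : ℝ × EuclideanSpace ℝ (Fin d) =>
      ((i : ℝ) - y.1) ^ e * g y) S' := by
    apply Integrable.mono' hg.integrableOn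
      ((hms.aestronglyMeasurable.restrict).mul (hg.1.restrict))
    filter_upwards [ae_restrict_mem hS'm] with y hy
    have hy1 : y.1 < (i : ℝ) - 1 := hy.1
    have hb : (1:ℝ) ≤ (i : ℝ) - y.1 := by linarith
    have hr1 : ((i : ℝ) - y.1) ^ e ≤ 1 := Real.rpow_le_one_of_one_le_of_nonpos hb hele
    have hr0 : 0 ≤ ((i : ℝ) - y.1) ^ e := Real.rpow_nonneg (by linarith) e
    simp only [Pi.mul_apply]
    rw [Real.norm_eq_abs, abs_of_nonneg (mul_nonneg hr0 (hg0 y))]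
    calc ((i : ℝ) - y.1) ^ e * g y ≤ 1 * g y :=
        mul_le_mul_of_nonneg_right hr1 (hg0 y)
      _ = g y := one_mul _
  have hintS : IntegrableOn (fun y : ℝ × EuclideanSpace ℝ (Fin d) =>
      (z.1 - y.1) ^ e * g y) S := by
    apply Integrable.mono' hg.integrableOn
      ((hmsz.aestronglyMeasurable.restrict).mul (hg.1.restrict))
    filter_upwards [ae_restrict_mem hSm] with y hy
    have hy1 : y.1 < z.1 - 1 := hy.1
    have hb : (1:ℝ) ≤ z.1 - y.1 := by linarith
    have hr1 : (z.1 - y.1) ^ e ≤ 1 := Real.rpow_le_one_of_one_le_of_nonpos hb hele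
    have hr0 : 0 ≤ (z.1 - y.1) ^ e := Real.rpow_nonneg (by linarith) e
    simp only [Pi.mul_apply]
    rw [Real.norm_eq_abs, abs_of_nonneg (mul_nonneg hr0 (hg0 y))]
    calc (z.1 - y.1) ^ e * g y ≤ 1 * g y := mul_le_mul_of_nonneg_right hr1 (hg0 y)
      _ = g y := one_mul _
  have hintS2 : IntegrableOn (fun y : ℝ × EuclideanSpace ℝ (Fin d) =>
      ((i : ℝ) - y.1) ^ e * g y) S := hint'.mono_set hSS'
  -- key comparison
  have hkey : (2:ℝ) ^ e * (∫ y in S, (z.1 - y.1) ^ e * g y) ≤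
      ∫ y in S', ((i : ℝ) - y.1) ^ e * g y := by
    rw [← integral_const_mul]
    calc (∫ y in S, (2:ℝ) ^ e * ((z.1 - y.1) ^ e * g y))
        ≤ ∫ y in S, ((i : ℝ) - y.1) ^ e * g y := by
          apply setIntegral_mono_on (hintS.const_mul _) hintS2 hSm
          intro y hy
          have hy1 : y.1 < z.1 - 1 := hy.1
          have hb1 : (1:ℝ) < z.1 - y.1 := by linarith
          have hbi : 0 < (i : ℝ) - y.1 := by linarith
          have hle : (i : ℝ) - y.1 ≤ 2 * (z.1 - y.1) := by linarith
          have h1 : (2 * (z.1 - y.1)) ^ e ≤ ((i : ℝ) - y.1) ^ e :=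
            Real.rpow_le_rpow_of_nonpos hbi hle hele
          have h2 : (2 * (z.1 - y.1)) ^ e = (2:ℝ) ^ e * (z.1 - y.1) ^ e :=
            Real.mul_rpow (by norm_num) (by linarith)
          calc (2:ℝ) ^ e * ((z.1 - y.1) ^ e * g y)
              = ((2:ℝ) ^ e * (z.1 - y.1) ^ e) * g y := by ring
            _ ≤ ((i : ℝ) - y.1) ^ e * g y := by
                apply mul_le_mul_of_nonneg_right _ (hg0 y)
                rw [← h2]; exact h1
      _ ≤ ∫ y in S', ((i : ℝ) - y.1) ^ e * g y := by
          apply setIntegral_mono_set hint'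
          · filter_upwards [ae_restrict_mem hS'm] with y hy
            have hy1 : y.1 < (i : ℝ) - 1 := hy.1
            exact mul_nonneg (Real.rpow_nonneg (by linarith) e) (hg0 y)
          · exact HasSubset.Subset.eventuallyLE hSS'
  have hI'nn : 0 ≤ ∫ y in S', ((i : ℝ) - y.1) ^ e * g y := by
    apply setIntegral_nonneg hS'm
    intro y hy
    have hy1 : y.1 < (i : ℝ) - 1 := hy.1
    exact mul_nonneg (Real.rpow_nonneg (by linarith) e) (hg0 y)
  -- assemble
  have h2e : (2:ℝ) ^ (-(d : ℝ) / 2) = (2:ℝ) ^ e := by rw [he']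
  rw [h2e]
  calc Real.exp (-2) * (2:ℝ) ^ e * lam
      < Real.exp (-2) * (2:ℝ) ^ e *
          (Real.exp (-2 * z.1) * ∫ y in S, (z.1 - y.1) ^ e * g y) := by
        apply mul_lt_mul_of_pos_left hT
        positivity
    _ = Real.exp (-2) * Real.exp (-2 * z.1) *
          ((2:ℝ) ^ e * ∫ y in S, (z.1 - y.1) ^ e * g y) := by ring
    _ ≤ Real.exp (-2) * Real.exp (-2 * z.1) *
          ∫ y in S', ((i : ℝ) - y.1) ^ e * g y := by
        apply mul_le_mul_of_nonneg_left hkey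
        positivity
    _ = Real.exp (-2 + -2 * z.1) * ∫ y in S', ((i : ℝ) - y.1) ^ e * g y := by
        rw [Real.exp_add]
    _ ≤ Real.exp (-2 * (i : ℝ)) * ∫ y in S', ((i : ℝ) - y.1) ^ e * g y := by
        apply mul_le_mul_of_nonneg_right _ hI'nn
        apply Real.exp_le_exp.mpr
        linarith
end

section
/- Let n ≥ 1 and k ≥ 1. There is a constant C = C(n, k) such that for all x, y ∈ ℝⁿ with |x − y| > 1 and all t > 0, |tᵏ ∂ᵏ/∂tᵏ p_t(x, y)| ≤ C e^{−x₁ − y₁ − |x − y|} |x − y|^{(k − n)/2}, where p_t(x, y) = (4πt)^{−n/2} e^{−x₁−y₁} e^{−t} e^{−|x−y|²/(4t)}. -/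
/-!
Up to the factor `(4π)^(-n/2) e^(-x₁-y₁)`, the kernel is `t^(-n/2) e^(-w)` with `b = |x-y|²/4`,
`v = b/t - t` and `w = b/t + t`. Since `t ∂ₜ v = -w` and `t ∂ₜ w = -v`, induction on `k` shows that
`tᵏ ∂ₜᵏ` of it is the same function times a polynomial in `v` and `w` of weight at most `k`, where
`v` has weight 1 and `w` weight 2.

With `r = |x-y|` put `U = w - r = (t - r/2)²/t ≥ 0`. Then `e^(-w) = e^(-r) e^(-U)`,
`|v| ≤ 2√r (1+U)`, `w ≤ r (1+U)` and `t^(-1/2) ≤ 3 (1+U)/√r`, so every monomial `vᵅ wᵝ` times the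
kernel is at most `e^(-r) r^((α+2β-n)/2)` times a polynomial in `U` times `e^(-U)`, and the
latter is bounded.
-/

open Real
open scoped Nat

namespace DriftHeatKernel

noncomputable def v : ℝ → ℝ → ℝ := fun b t => b / t - t

noncomputable def w : ℝ → ℝ → ℝ := fun b t => b / t + t

noncomputable def radial (n : ℕ) (b t : ℝ) : ℝ := t ^ (-(n : ℝ) / 2) * exp (-w b t)

noncomputable def weightedPolys (k : ℕ) : Submodule ℝ (ℝ → ℝ → ℝ) :=
  Submodule.span ℝ {P | ∃ α β, α + 2 * β ≤ k ∧ v ^ α * w ^ β = P}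

section Derivatives

variable {b t : ℝ}

lemma hasDerivAt_v (ht : t ≠ 0) : HasDerivAt (v b) (-w b t / t) t := by
  have h : HasDerivAt (fun s => b * s⁻¹ - s) (b * -(t ^ 2)⁻¹ - 1) t :=
    ((hasDerivAt_inv ht).const_mul b).sub (hasDerivAt_id' t)
  convert h using 1
  · ext s; simp [v, div_eq_mul_inv]
  · simp only [w]; field_simp; ring

lemma hasDerivAt_w (ht : t ≠ 0) : HasDerivAt (w b) (-v b t / t) t := by
  have h : HasDerivAt (fun s => b * s⁻¹ + s) (b * -(t ^ 2)⁻¹ + 1) t :=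
    ((hasDerivAt_inv ht).const_mul b).add (hasDerivAt_id' t)
  convert h using 1
  · ext s; simp [w, div_eq_mul_inv]
  · simp only [v]; field_simp; ring

lemma radial_pos (n : ℕ) (b : ℝ) (ht : 0 < t) : 0 < radial n b t := by
  unfold radial; positivity

lemma hasDerivAt_radial (n : ℕ) (ht : 0 < t) :
    HasDerivAt (radial n b) (radial n b t * (v b t - n / 2) / t) t := by
  have h : HasDerivAt (fun s => s ^ (-(n : ℝ) / 2) * exp (-w b s)) _ t :=
    (hasDerivAt_rpow_const (Or.inl ht.ne')).mul (hasDerivAt_w (b := b) ht.ne').neg.exp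
  refine h.congr_deriv ?_
  simp only [radial, Pi.neg_apply, rpow_sub_one ht.ne']
  field_simp
  ring

end Derivatives

lemma monomial_mem_weightedPolys {k α β : ℕ} (h : α + 2 * β ≤ k) :
    v ^ α * w ^ β ∈ weightedPolys k :=
  Submodule.subset_span ⟨α, β, h, rfl⟩

lemma weightedPolys_mono {k l : ℕ} (h : k ≤ l) : weightedPolys k ≤ weightedPolys l :=
  Submodule.span_mono fun _ ⟨α, β, hαβ, hP⟩ => ⟨α, β, hαβ.trans h, hP⟩

lemma v_mul_mem_weightedPolys {k : ℕ} {P : ℝ → ℝ → ℝ} (hP : P ∈ weightedPolys k) :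
    v * P ∈ weightedPolys (k + 1) := by
  induction hP using Submodule.span_induction with
  | mem P hP =>
    obtain ⟨α, β, hαβ, rfl⟩ := hP
    rw [← mul_assoc, ← pow_succ']
    exact monomial_mem_weightedPolys (by omega)
  | zero => simp
  | add P Q _ _ hP hQ => rw [mul_add]; exact add_mem hP hQ
  | smul c P _ hP => rw [mul_smul_comm]; exact Submodule.smul_mem _ c hP

lemma exists_euler_deriv {k : ℕ} {P : ℝ → ℝ → ℝ} (hP : P ∈ weightedPolys k) :
    ∃ Q ∈ weightedPolys (k + 1), ∀ b t, t ≠ 0 → HasDerivAt (P b) (Q b t / t) t := by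
  induction hP using Submodule.span_induction with
  | mem P hP =>
    obtain ⟨α, β, hαβ, rfl⟩ := hP
    refine ⟨-((α : ℝ) • (v ^ (α - 1) * w ^ (β + 1)) + (β : ℝ) • (v ^ (α + 1) * w ^ (β - 1))),
      neg_mem (add_mem ?_ ?_), fun b t ht => ?_⟩
    · rcases α with _ | α
      · simp
      · exact Submodule.smul_mem _ _ (monomial_mem_weightedPolys (by omega))
    · rcases β with _ | β
      · simp
      · exact Submodule.smul_mem _ _ (monomial_mem_weightedPolys (by omega))
    have h : HasDerivAt (fun s => v b s ^ α * w b s ^ β) _ t :=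
      ((hasDerivAt_v ht).pow α).mul ((hasDerivAt_w ht).pow β)
    refine h.congr_deriv ?_
    simp only [Pi.neg_apply, Pi.add_apply, Pi.smul_apply, Pi.mul_apply, Pi.pow_apply, smul_eq_mul]
    ring
  | zero => exact ⟨0, zero_mem _, fun b t _ => (hasDerivAt_const t 0).congr_deriv (by simp)⟩
  | add P₁ P₂ _ _ h₁ h₂ =>
    obtain ⟨Q₁, hQ₁, hd₁⟩ := h₁
    obtain ⟨Q₂, hQ₂, hd₂⟩ := h₂
    exact ⟨Q₁ + Q₂, add_mem hQ₁ hQ₂, fun b t ht =>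
      ((hd₁ b t ht).add (hd₂ b t ht)).congr_deriv (add_div _ _ _).symm⟩
  | smul c P _ h =>
    obtain ⟨Q, hQ, hd⟩ := h
    exact ⟨c • Q, Submodule.smul_mem _ c hQ, fun b t ht =>
      ((hd b t ht).const_mul c).congr_deriv (mul_div_assoc _ _ _).symm⟩

lemma exists_iteratedDeriv_radial_eq (n k : ℕ) : ∃ P ∈ weightedPolys k,
    ∀ b t, 0 < t → t ^ k * iteratedDeriv k (radial n b) t = radial n b t * P b t := by
  induction k with
  | zero =>
    exact ⟨1, by simpa using monomial_mem_weightedPolys (k := 0) (α := 0) (β := 0) le_rfl,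
      by simp⟩
  | succ k ih =>
    obtain ⟨P, hP, hrep⟩ := ih
    obtain ⟨Q, hQ, hQP⟩ := exists_euler_deriv hP
    -- `tᵏ⁺¹ ∂ᵏ⁺¹ = (t ∂ₜ - k) tᵏ ∂ᵏ` and `t ∂ₜ (radial · P) = radial · ((v - n/2) P + t ∂ₜ P)`
    refine ⟨v * P - ((n / 2 + k : ℝ) • P) + Q, add_mem (sub_mem (v_mul_mem_weightedPolys hP)
      (Submodule.smul_mem _ _ (weightedPolys_mono k.le_succ hP))) hQ, fun b t ht => ?_⟩
    have hev : iteratedDeriv k (radial n b) =ᶠ[nhds t] fun s => radial n b s * P b s / s ^ k := by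
      filter_upwards [Ioi_mem_nhds ht] with s hs
      rw [← hrep b s hs, mul_div_cancel_left₀ _ (pow_ne_zero k (ne_of_gt hs))]
    have h : HasDerivAt (fun s => radial n b s * P b s / s ^ k) _ t :=
      ((hasDerivAt_radial n ht).mul (hQP b t ht.ne')).div (hasDerivAt_pow k t)
        (pow_ne_zero k ht.ne')
    rw [iteratedDeriv_succ, hev.deriv_eq, h.deriv]
    simp only [Pi.add_apply, Pi.sub_apply, Pi.mul_apply, Pi.smul_apply, smul_eq_mul]
    rcases k with _ | k
    · simp only [pow_zero, CharP.cast_eq_zero, zero_mul, mul_zero, sub_zero]; field_simp; ring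
    · rw [Nat.add_sub_cancel]; field_simp; ring

lemma one_add_pow_mul_exp_neg_le (m : ℕ) {x : ℝ} (hx : 0 ≤ x) :
    (1 + x) ^ m * exp (-x) ≤ m ! * exp 1 := by
  have h := pow_div_factorial_le_exp (x := 1 + x) (by linarith) m
  rw [div_le_iff₀ (by positivity), exp_add] at h
  calc (1 + x) ^ m * exp (-x) ≤ exp 1 * exp x * m ! * exp (-x) := by gcongr
    _ = m ! * exp 1 := by rw [exp_neg]; field_simp

noncomputable def excess (r t : ℝ) : ℝ := (t - r / 2) ^ 2 / t

section Estimates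

variable {r t : ℝ}

lemma excess_nonneg (ht : 0 < t) : 0 ≤ excess r t := by
  unfold excess; positivity

lemma w_eq_add_excess (ht : t ≠ 0) : w (r ^ 2 / 4) t = r + excess r t := by
  simp only [w, excess]; field_simp; ring

lemma v_sq_eq (ht : t ≠ 0) : v (r ^ 2 / 4) t ^ 2 = excess r t * (excess r t + 2 * r) := by
  simp only [v, excess]; field_simp; ring

lemma abs_v_le (hr : 1 ≤ r) (ht : 0 < t) : |v (r ^ 2 / 4) t| ≤ 2 * √r * (1 + excess r t) := by
  have hU := excess_nonneg (r := r) ht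
  apply abs_le_of_sq_le_sq _ (by positivity)
  rw [v_sq_eq ht.ne', mul_pow, mul_pow, sq_sqrt (by linarith)]
  nlinarith [mul_nonneg (sub_nonneg.2 hr) (sq_nonneg (excess r t))]

lemma w_le (hr : 1 ≤ r) (ht : 0 < t) : w (r ^ 2 / 4) t ≤ √r ^ 2 * (1 + excess r t) := by
  have hU := excess_nonneg (r := r) ht
  rw [sq_sqrt (by linarith), w_eq_add_excess ht.ne']
  nlinarith

lemma le_eight_mul_one_add_excess (hr : 1 ≤ r) (ht : 0 < t) : r ≤ 8 * (1 + excess r t) * t := by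
  have hUt : excess r t * t = (t - r / 2) ^ 2 := by
    unfold excess; field_simp
  rcases le_or_gt r (8 * t) with h | h
  · nlinarith [sq_nonneg (t - r / 2)]
  · nlinarith

lemma rpow_neg_div_two_le (n : ℕ) (hr : 1 ≤ r) (ht : 0 < t) :
    t ^ (-(n : ℝ) / 2) ≤ (3 * (1 + excess r t) / √r) ^ n := by
  have hU := excess_nonneg (r := r) ht
  have hsq : √r ≤ 3 * (1 + excess r t) * √t := by
    rw [← sqrt_sq (by positivity : 0 ≤ 3 * (1 + excess r t)), ← sqrt_mul (by positivity)]
    apply sqrt_le_sqrt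
    nlinarith [le_eight_mul_one_add_excess hr ht]
  rw [rpow_div_two_eq_sqrt _ ht.le, rpow_neg (sqrt_nonneg t), rpow_natCast, ← inv_pow]
  gcongr
  rw [inv_le_iff_one_le_mul₀ (sqrt_pos.2 ht)]
  calc 1 = √r / √r := (div_self (by positivity)).symm
    _ ≤ 3 * (1 + excess r t) * √t / √r := by gcongr
    _ = _ := by ring

lemma radial_mul_abs_monomial_le (n α β : ℕ) (hr : 1 ≤ r) (ht : 0 < t) :
    radial n (r ^ 2 / 4) t * |(v ^ α * w ^ β) (r ^ 2 / 4) t| ≤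
      2 ^ α * 3 ^ n * (n + α + β)! * exp 1 * (exp (-r) * √r ^ (α + 2 * β) / √r ^ n) := by
  set U := excess r t
  have hU : 0 ≤ U := excess_nonneg ht
  have hw : 0 ≤ w (r ^ 2 / 4) t := by rw [w_eq_add_excess ht.ne']; linarith
  have hexp : exp (-w (r ^ 2 / 4) t) = exp (-r) * exp (-U) := by
    rw [w_eq_add_excess ht.ne', neg_add, exp_add]
  calc radial n (r ^ 2 / 4) t * |(v ^ α * w ^ β) (r ^ 2 / 4) t|
      = t ^ (-(n : ℝ) / 2) * |v (r ^ 2 / 4) t| ^ α * w (r ^ 2 / 4) t ^ β *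
          (exp (-r) * exp (-U)) := by
        simp only [radial, Pi.mul_apply, Pi.pow_apply, abs_mul, abs_pow, abs_of_nonneg hw, hexp]
        ring
    _ ≤ (3 * (1 + U) / √r) ^ n * (2 * √r * (1 + U)) ^ α * (√r ^ 2 * (1 + U)) ^ β *
          (exp (-r) * exp (-U)) := by
        gcongr
        exacts [rpow_neg_div_two_le n hr ht, abs_v_le hr ht, w_le hr ht]
    _ = 2 ^ α * 3 ^ n * (exp (-r) * √r ^ (α + 2 * β) / √r ^ n) *
          ((1 + U) ^ (n + α + β) * exp (-U)) := by
        have : 0 < √r := sqrt_pos.2 (by linarith)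
        simp only [div_pow, mul_pow, pow_add, pow_mul]
        field_simp
    _ ≤ 2 ^ α * 3 ^ n * (exp (-r) * √r ^ (α + 2 * β) / √r ^ n) * ((n + α + β)! * exp 1) := by
        gcongr _ * ?_
        exact one_add_pow_mul_exp_neg_le _ hU
    _ = _ := by ring

lemma sqrt_pow_div_sqrt_pow_le {r : ℝ} (hr : 1 ≤ r) {j k : ℕ} (n : ℕ) (h : j ≤ k) :
    √r ^ j / √r ^ n ≤ r ^ (((k : ℝ) - n) / 2) := by
  rw [rpow_div_two_eq_sqrt _ (by linarith), rpow_sub (sqrt_pos.2 (by linarith)), rpow_natCast,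
    rpow_natCast]
  gcongr
  exact one_le_sqrt.2 hr

end Estimates

noncomputable def kernelBounded (n k : ℕ) : Submodule ℝ (ℝ → ℝ → ℝ) where
  carrier := {P | ∃ C, ∀ r t, 1 ≤ r → 0 < t →
    radial n (r ^ 2 / 4) t * |P (r ^ 2 / 4) t| ≤ C * (exp (-r) * r ^ (((k : ℝ) - n) / 2))}
  zero_mem' := ⟨0, fun r t _ _ => by simp⟩
  add_mem' := by
    rintro P Q ⟨C, hC⟩ ⟨D, hD⟩
    refine ⟨C + D, fun r t hr ht => ?_⟩
    calc radial n (r ^ 2 / 4) t * |(P + Q) (r ^ 2 / 4) t|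
        ≤ radial n (r ^ 2 / 4) t * (|P (r ^ 2 / 4) t| + |Q (r ^ 2 / 4) t|) := by
          gcongr
          · exact (radial_pos n _ ht).le
          · exact abs_add_le _ _
      _ ≤ _ := by rw [mul_add, add_mul]; exact add_le_add (hC r t hr ht) (hD r t hr ht)
  smul_mem' := by
    rintro c P ⟨C, hC⟩
    refine ⟨|c| * C, fun r t hr ht => ?_⟩
    simp only [Pi.smul_apply, smul_eq_mul, abs_mul]
    rw [mul_left_comm, mul_assoc]
    exact mul_le_mul_of_nonneg_left (hC r t hr ht) (abs_nonneg c)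

lemma weightedPolys_le_kernelBounded (n k : ℕ) : weightedPolys k ≤ kernelBounded n k := by
  refine Submodule.span_le.2 ?_
  rintro _ ⟨α, β, hαβ, rfl⟩
  refine ⟨2 ^ α * 3 ^ n * (n + α + β)! * exp 1, fun r t hr ht => ?_⟩
  refine (radial_mul_abs_monomial_le n α β hr ht).trans ?_
  rw [mul_div_assoc]
  gcongr
  exact sqrt_pow_div_sqrt_pow_le hr n hαβ

lemma abs_pow_mul_iteratedDeriv_radial_le (n k : ℕ) : ∃ C, ∀ r t, 1 ≤ r → 0 < t →
    |t ^ k * iteratedDeriv k (radial n (r ^ 2 / 4)) t| ≤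
      C * (exp (-r) * r ^ (((k : ℝ) - n) / 2)) := by
  obtain ⟨P, hP, hrep⟩ := exists_iteratedDeriv_radial_eq n k
  obtain ⟨C, hC⟩ := weightedPolys_le_kernelBounded n k hP
  refine ⟨C, fun r t hr ht => ?_⟩
  rw [hrep _ _ ht, abs_mul, abs_of_pos (radial_pos n _ ht)]
  exact hC r t hr ht

lemma heatKernel_eq_mul_radial (n : ℕ) (a r : ℝ) {s : ℝ} (hs : 0 < s) :
    (4 * π * s) ^ (-(n : ℝ) / 2) * exp a * exp (-s) * exp (-r ^ 2 / (4 * s)) =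
      (4 * π) ^ (-(n : ℝ) / 2) * exp a * radial n (r ^ 2 / 4) s := by
  have hexp : exp (-w (r ^ 2 / 4) s) = exp (-s) * exp (-r ^ 2 / (4 * s)) := by
    rw [← exp_add]; simp only [w]; congr 1; ring
  rw [mul_rpow (by positivity) hs.le, radial, hexp]
  ring

end DriftHeatKernel

open DriftHeatKernel in
theorem stmt18_general (n : ℕ) (hn : 0 < n) (k : ℕ) :
    ∃ C : ℝ, 0 < C ∧ ∀ x y : EuclideanSpace ℝ (Fin n), ‖x - y‖ > 1 → ∀ t : ℝ, 0 < t →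
      |t ^ k * iteratedDeriv k
          (fun s => (4 * π * s) ^ (-(n : ℝ) / 2) * Real.exp (-x ⟨0, hn⟩ - y ⟨0, hn⟩) *
            Real.exp (-s) * Real.exp (-‖x - y‖ ^ 2 / (4 * s))) t| ≤
        C * Real.exp (-x ⟨0, hn⟩ - y ⟨0, hn⟩ - ‖x - y‖) * ‖x - y‖ ^ (((k : ℝ) - n) / 2) := by
  obtain ⟨C, hC⟩ := abs_pow_mul_iteratedDeriv_radial_le n k
  refine ⟨|C| + 1, by positivity, fun x y hxy t ht => ?_⟩
  set r := ‖x - y‖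
  set a := -x ⟨0, hn⟩ - y ⟨0, hn⟩
  have hf : (fun s => (4 * π * s) ^ (-(n : ℝ) / 2) * exp a * exp (-s) * exp (-r ^ 2 / (4 * s)))
      =ᶠ[nhds t] fun s => (4 * π) ^ (-(n : ℝ) / 2) * exp a * radial n (r ^ 2 / 4) s := by
    filter_upwards [Ioi_mem_nhds ht] with s hs using heatKernel_eq_mul_radial n a r hs
  have hc : (4 * π) ^ (-(n : ℝ) / 2) ≤ 1 :=
    rpow_le_one_of_one_le_of_nonpos (by nlinarith [pi_gt_three])
      (by rw [neg_div]; exact neg_nonpos.2 (by positivity))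
  rw [hf.iteratedDeriv_eq, iteratedDeriv_const_mul_field, mul_left_comm, abs_mul,
    abs_of_pos (by positivity)]
  calc (4 * π) ^ (-(n : ℝ) / 2) * exp a * |t ^ k * iteratedDeriv k (radial n (r ^ 2 / 4)) t|
      ≤ 1 * exp a * ((|C| + 1) * (exp (-r) * r ^ (((k : ℝ) - n) / 2))) := by
        gcongr ?_ * _ * ?_
        exact (hC r t hxy.le ht).trans (by gcongr; linarith [le_abs_self C])
    _ = (|C| + 1) * exp (a - r) * r ^ (((k : ℝ) - n) / 2) := by
        rw [sub_eq_add_neg a r, exp_add]; ring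

theorem stmt18 (n : ℕ) (hn : 0 < n) (k : ℕ) (hk : 1 ≤ k) :
    ∃ C : ℝ, 0 < C ∧ ∀ x y : EuclideanSpace ℝ (Fin n), ‖x - y‖ > 1 → ∀ t : ℝ, 0 < t →
      |t ^ k * iteratedDeriv k
          (fun s => (4 * π * s) ^ (-(n : ℝ) / 2) * Real.exp (-x ⟨0, hn⟩ - y ⟨0, hn⟩) *
            Real.exp (-s) * Real.exp (-‖x - y‖ ^ 2 / (4 * s))) t| ≤
        C * Real.exp (-x ⟨0, hn⟩ - y ⟨0, hn⟩ - ‖x - y‖) * ‖x - y‖ ^ (((k : ℝ) - n) / 2) :=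
  stmt18_general n hn k
end

section
/- Let n ≥ 1 and k ≥ 1. There is a constant C = C(n, k) such that for all x, y ∈ ℝⁿ with |x − y| > 1, (∫₀^∞ |tᵏ ∂ᵏ/∂tᵏ p_t(x, y)|² dt/t)^{1/2} ≤ C |x − y|^{(k − n)/2 − 1/4} e^{−x₁ − y₁ − |x − y|}, where p_t(x, y) = (4πt)^{−n/2} e^{−x₁−y₁} e^{−t} e^{−|x−y|²/(4t)}. -/
/-!
Write r = |x - y|, so that the kernel is e^{-x₁-y₁} u(t) with u(t) = (4πt)^{-n/2} e^{-t} e^{-r²/(4t)}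
and u'/u = -n/(2t) + w, where w = r²/(4t²) - 1. As w' = -2t⁻¹(w + 1), the k-th derivative of u is
u times a polynomial in w and t⁻¹ whose monomials w^a t^{-b} all have weight a + 2b ≥ k. The
squared norm is therefore bounded by integrals of t^j w^{2a} e^{-(2t + r²/(2t))}, and the
substitution y = √t - r/(2√t) turns 2t + r²/(2t) into 2r + 2y². Near the saddle point t = r/2 it
makes dt of order √r dy and w of order y/√r, so each integral is O(r^{j + 1/2 - a} e^{-2r}); the
weight condition turns this into O(r^{k - n - 1/2} e^{-2r}).
-/

open Real MeasureTheory Set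

noncomputable section

namespace DriftHeatKernel

lemma zpow_le_pow_natAbs_mul_zpow {c r T : ℝ} (hc : 0 < c) (hr : 0 < r) (hlo : r / c ≤ T)
    (hhi : T ≤ c * r) (i : ℤ) : T ^ i ≤ c ^ i.natAbs * r ^ i := by
  have hT : 0 < T := (div_pos hr hc).trans_le hlo
  rcases i with m | m
  · simp only [Int.ofNat_eq_natCast, zpow_natCast, Int.natAbs_natCast, ← mul_pow]
    exact pow_le_pow_left₀ hT.le hhi m
  · rw [zpow_negSucc, zpow_negSucc, Int.natAbs_negSucc]
    calc (T ^ (m + 1))⁻¹ ≤ ((r / c) ^ (m + 1))⁻¹ :=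
          inv_anti₀ (by positivity) (pow_le_pow_left₀ (by positivity) hlo _)
      _ = c ^ (m + 1) * (r ^ (m + 1))⁻¹ := by rw [div_pow]; field_simp

lemma integrable_add_sq_pow_mul_exp_neg_two_mul_sq {c : ℝ} (hc : 0 ≤ c) (L : ℕ) :
    Integrable fun y : ℝ => (c + y ^ 2) ^ L * exp (-(2 * y ^ 2)) := by
  refine ((integrable_exp_neg_mul_sq one_pos).const_mul (L.factorial * exp c)).mono'
    (by fun_prop) (Filter.Eventually.of_forall fun y => ?_)
  have hpow := pow_div_factorial_le_exp _ (by positivity : 0 ≤ c + y ^ 2) L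
  rw [div_le_iff₀ (by positivity)] at hpow
  rw [norm_of_nonneg (by positivity)]
  calc (c + y ^ 2) ^ L * exp (-(2 * y ^ 2))
        ≤ exp (c + y ^ 2) * L.factorial * exp (-(2 * y ^ 2)) := by gcongr
    _ = L.factorial * exp c * exp (-1 * y ^ 2) := by
        rw [mul_right_comm, exp_add, mul_assoc (exp c), ← exp_add]
        ring_nf

lemma rpow_half_sq_mul_rpow_mul_exp {c M r : ℝ} (hc : 0 < c) (hM : 0 ≤ M) (hr : 0 < r)
    (e : ℝ) :
    (c ^ 2 * (M * r ^ e * exp (-(2 * r)))) ^ (1 / 2 : ℝ)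
      = √M * r ^ (e / 2) * (c * exp (-r)) := by
  have hsq : (r ^ (e / 2)) ^ 2 = r ^ e := by
    rw [← rpow_natCast, ← rpow_mul hr.le]; norm_num
  rw [← sqrt_eq_rpow, ← sqrt_sq (by positivity : 0 ≤ √M * r ^ (e / 2) * (c * exp (-r)))]
  congr 1
  rw [mul_pow, mul_pow, mul_pow, sq_sqrt hM, hsq, ← exp_nat_mul]
  push_cast
  ring_nf

def heatProfile (n : ℕ) (r t : ℝ) : ℝ :=
  (4 * π * t) ^ (-(n : ℝ) / 2) * exp (-t) * exp (-r ^ 2 / (4 * t))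

def gaussRate (r t : ℝ) : ℝ := r ^ 2 / (4 * t ^ 2) - 1

lemma hasDerivAt_gaussRate (r : ℝ) {t : ℝ} (ht : t ≠ 0) :
    HasDerivAt (gaussRate r) (-2 * t⁻¹ * (gaussRate r t + 1)) t := by
  have h := ((hasDerivAt_const t (r ^ 2)).div ((hasDerivAt_pow 2 t).const_mul 4)
    (by positivity)).sub_const 1
  refine h.congr_deriv ?_
  simp only [gaussRate]
  field_simp
  ring

lemma hasDerivAt_heatProfile (n : ℕ) (r : ℝ) {t : ℝ} (ht : 0 < t) :
    HasDerivAt (heatProfile n r)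
      (heatProfile n r t * (-(n : ℝ) / 2 * t⁻¹ + gaussRate r t)) t := by
  have hpow : HasDerivAt (fun s => (4 * π * s) ^ (-(n : ℝ) / 2))
      (-(n : ℝ) / 2 * (4 * π * t) ^ (-(n : ℝ) / 2 - 1) * (4 * π)) t :=
    ((hasDerivAt_id t).const_mul (4 * π)).rpow_const (p := -(n : ℝ) / 2)
      (Or.inl (by simp; positivity)) |>.congr_deriv (by simp; ring)
  have hgauss : HasDerivAt (fun s => -r ^ 2 / (4 * s)) (r ^ 2 / (4 * t ^ 2)) t := by
    refine ((hasDerivAt_const t (-r ^ 2)).div ((hasDerivAt_id t).const_mul 4)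
      (by simp; positivity)).congr_deriv ?_
    simp only [id]
    field_simp
    ring
  refine ((hpow.mul (hasDerivAt_neg t).exp).mul hgauss.exp).congr_deriv ?_
  rw [rpow_sub (by positivity), rpow_one]
  simp only [heatProfile, gaussRate, Pi.mul_apply]
  field_simp
  ring

lemma continuousOn_heatProfile (n : ℕ) (r : ℝ) : ContinuousOn (heatProfile n r) (Ioi 0) :=
  fun _ ht => (hasDerivAt_heatProfile n r ht).continuousAt.continuousWithinAt

lemma heatProfile_sq (n : ℕ) (r : ℝ) {t : ℝ} (ht : 0 < t) :
    heatProfile n r t ^ 2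
      = ((4 * π) ^ n)⁻¹ * t ^ (-(n : ℤ)) * exp (-(2 * t + r ^ 2 / (2 * t))) := by
  have hpow : ((4 * π * t) ^ (-(n : ℝ) / 2)) ^ 2 = ((4 * π) ^ n)⁻¹ * (t ^ n)⁻¹ := by
    rw [← rpow_natCast, ← rpow_mul (by positivity), show -(n : ℝ) / 2 * (2 : ℕ) = -n by
      push_cast; ring, rpow_neg (by positivity), rpow_natCast, mul_pow, mul_inv]
  have hexp : (exp (-t) * exp (-r ^ 2 / (4 * t))) ^ 2 = exp (-(2 * t + r ^ 2 / (2 * t))) := by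
    rw [← exp_add, ← exp_nat_mul]
    congr 1
    field_simp
    ring
  rw [heatProfile, mul_assoc, mul_pow, hpow, hexp, zpow_neg, zpow_natCast]

def admissibleMonomial (ab : ℕ × ℕ) : ℝ → ℝ → ℝ :=
  fun r t => gaussRate r t ^ ab.1 * t⁻¹ ^ ab.2

def admissible (k : ℕ) : Submodule ℝ (ℝ → ℝ → ℝ) :=
  Submodule.span ℝ (admissibleMonomial '' {ab | k ≤ ab.1 + 2 * ab.2})

lemma admissibleMonomial_mem_admissible {k a b : ℕ} (h : k ≤ a + 2 * b) :
    admissibleMonomial (a, b) ∈ admissible k :=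
  Submodule.subset_span ⟨(a, b), h, rfl⟩

lemma hasDerivAt_admissibleMonomial (r : ℝ) (a b : ℕ) {t : ℝ} (ht : t ≠ 0) :
    HasDerivAt (admissibleMonomial (a, b) r)
      (-(2 * a) * admissibleMonomial (a, b + 1) r t
        - 2 * a * admissibleMonomial (a - 1, b + 1) r t
        - b * admissibleMonomial (a, b + 1) r t) t := by
  have h := ((hasDerivAt_gaussRate r ht).pow a).mul ((hasDerivAt_inv ht).pow b)
  refine h.congr_deriv ?_
  simp only [admissibleMonomial, Pi.pow_apply]
  rcases a with _ | a <;> rcases b with _ | b <;> simp <;> ring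

lemma exists_hasDerivAt_heatProfile_mul (n : ℕ) {k : ℕ} {q : ℝ → ℝ → ℝ}
    (hq : q ∈ admissible k) :
    ∃ q' ∈ admissible (k + 1), ∀ r t, 0 < t →
      HasDerivAt (fun s => heatProfile n r s * q r s) (heatProfile n r t * q' r t) t := by
  induction hq using Submodule.span_induction with
  | mem q hq =>
    obtain ⟨⟨a, b⟩, hab : k ≤ a + 2 * b, rfl⟩ := hq
    refine ⟨(-(n : ℝ) / 2 - 2 * a - b) • admissibleMonomial (a, b + 1)
      + admissibleMonomial (a + 1, b) - (2 * a : ℝ) • admissibleMonomial (a - 1, b + 1), ?_,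
      fun r t ht => ?_⟩
    · refine Submodule.sub_mem _ (Submodule.add_mem _ (Submodule.smul_mem _ _
        (admissibleMonomial_mem_admissible ?_)) (admissibleMonomial_mem_admissible ?_))
        (Submodule.smul_mem _ _ (admissibleMonomial_mem_admissible ?_)) <;> omega
    · refine ((hasDerivAt_heatProfile n r ht).mul
        (hasDerivAt_admissibleMonomial r a b ht.ne')).congr_deriv ?_
      simp only [admissibleMonomial, Pi.add_apply, Pi.sub_apply, Pi.smul_apply, smul_eq_mul]
      ring
  | zero =>
    exact ⟨0, Submodule.zero_mem _, fun r t _ => by simpa using hasDerivAt_const t (0 : ℝ)⟩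
  | add q₁ q₂ _ _ h₁ h₂ =>
    obtain ⟨q₁', hq₁', hd₁⟩ := h₁
    obtain ⟨q₂', hq₂', hd₂⟩ := h₂
    exact ⟨q₁' + q₂', Submodule.add_mem _ hq₁' hq₂', fun r t ht => by
      simp only [Pi.add_apply, mul_add]
      exact (hd₁ r t ht).add (hd₂ r t ht)⟩
  | smul c q _ h =>
    obtain ⟨q', hq', hd⟩ := h
    exact ⟨c • q', Submodule.smul_mem _ c hq', fun r t ht => by
      simpa only [Pi.smul_apply, smul_eq_mul, mul_left_comm] using (hd r t ht).const_mul c⟩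

lemma exists_iteratedDeriv_heatProfile (n k : ℕ) :
    ∃ q ∈ admissible k, ∀ r t, 0 < t →
      iteratedDeriv k (heatProfile n r) t = heatProfile n r t * q r t := by
  induction k with
  | zero =>
    exact ⟨admissibleMonomial (0, 0), admissibleMonomial_mem_admissible le_rfl,
      fun r t _ => by simp [admissibleMonomial]⟩
  | succ k ih =>
    obtain ⟨q, hq, hiter⟩ := ih
    obtain ⟨q', hq', hderiv⟩ := exists_hasDerivAt_heatProfile_mul n hq
    refine ⟨q', hq', fun r t ht => ?_⟩
    have hnear : iteratedDeriv k (heatProfile n r) =ᶠ[nhds t]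
        fun s => heatProfile n r s * q r s :=
      Filter.eventually_of_mem (Ioi_mem_nhds ht) fun s hs => hiter r s hs
    rw [iteratedDeriv_succ, hnear.deriv_eq, (hderiv r t ht).deriv]

section Substitution

variable {r : ℝ}

/-- `substMap r` inverts `t ↦ √t - r / (2√t)`, and `substSqrt r y = √(substMap r y)`. -/
def substSqrt (r y : ℝ) : ℝ := (y + √(y ^ 2 + 2 * r)) / 2

def substMap (r y : ℝ) : ℝ := substSqrt r y ^ 2

lemma sq_sqrt_sq_add (hr : 0 < r) (y : ℝ) : √(y ^ 2 + 2 * r) ^ 2 = y ^ 2 + 2 * r :=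
  sq_sqrt (by positivity)

lemma abs_lt_sqrt_sq_add (hr : 0 < r) (y : ℝ) : |y| < √(y ^ 2 + 2 * r) := by
  rw [← sqrt_sq_eq_abs]
  exact sqrt_lt_sqrt (sq_nonneg y) (by linarith)

lemma sqrt_sq_add_pos (hr : 0 < r) (y : ℝ) : 0 < √(y ^ 2 + 2 * r) :=
  sqrt_pos.2 (by positivity)

lemma substSqrt_pos (hr : 0 < r) (y : ℝ) : 0 < substSqrt r y := by
  have := abs_lt_sqrt_sq_add hr y
  have := neg_abs_le y
  unfold substSqrt
  linarith

lemma substMap_pos (hr : 0 < r) (y : ℝ) : 0 < substMap r y :=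
  pow_pos (substSqrt_pos hr y) 2

lemma div_two_mul_substSqrt (hr : 0 < r) (y : ℝ) :
    r / (2 * substSqrt r y) = (√(y ^ 2 + 2 * r) - y) / 2 := by
  rw [div_eq_iff (by linarith [substSqrt_pos hr y]), substSqrt]
  linear_combination (-1 / 2 : ℝ) * sq_sqrt_sq_add hr y

lemma two_mul_substMap_add (hr : 0 < r) (y : ℝ) :
    2 * substMap r y + r ^ 2 / (2 * substMap r y) = 2 * r + 2 * y ^ 2 := by
  have key : r ^ 2 / (2 * substMap r y) = 2 * (r / (2 * substSqrt r y)) ^ 2 := by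
    unfold substMap; field_simp
  rw [key, div_two_mul_substSqrt hr]
  unfold substMap substSqrt
  nlinarith [sq_sqrt_sq_add hr y]

lemma gaussRate_substMap (hr : 0 < r) (y : ℝ) :
    gaussRate r (substMap r y) = -(y * √(y ^ 2 + 2 * r)) / substMap r y := by
  have hσ := substSqrt_pos hr y
  have key : gaussRate r (substMap r y)
      = ((r / (2 * substSqrt r y)) ^ 2 - substSqrt r y ^ 2) / substMap r y := by
    unfold gaussRate substMap; field_simp; ring
  rw [key, div_two_mul_substSqrt hr]
  unfold substSqrt
  ring

lemma hasDerivAt_substMap (hr : 0 < r) (y : ℝ) :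
    HasDerivAt (substMap r) (2 * substMap r y / √(y ^ 2 + 2 * r)) y := by
  have hsqrt : HasDerivAt (fun y => √(y ^ 2 + 2 * r)) (2 * y / (2 * √(y ^ 2 + 2 * r))) y :=
    ((hasDerivAt_pow 2 y).add_const _).sqrt (by positivity) |>.congr_deriv (by simp)
  refine ((((hasDerivAt_id y).add hsqrt).div_const 2).pow 2).congr_deriv ?_
  simp only [substMap, substSqrt, Pi.add_apply, id_eq]
  field_simp
  ring

lemma continuous_substMap (r : ℝ) : Continuous (substMap r) := by
  unfold substMap substSqrt
  fun_prop

lemma strictMono_substMap (hr : 0 < r) : StrictMono (substMap r) :=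
  strictMono_of_deriv_pos fun y => by
    rw [(hasDerivAt_substMap hr y).deriv]
    have := sqrt_sq_add_pos hr y
    have := substMap_pos hr y
    positivity

lemma range_substMap (hr : 0 < r) : range (substMap r) = Ioi 0 := by
  refine (range_subset_iff.2 (substMap_pos hr)).antisymm fun t (ht : 0 < t) => ?_
  have hst : 0 < √t := sqrt_pos.2 ht
  refine ⟨√t - r / (2 * √t), ?_⟩
  have hsqrt : √((√t - r / (2 * √t)) ^ 2 + 2 * r) = √t + r / (2 * √t) := by
    rw [sqrt_eq_iff_eq_sq (by positivity) (by positivity)]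
    field_simp
    ring
  simp only [substMap, substSqrt, hsqrt]
  ring_nf
  exact sq_sqrt ht.le

lemma substMap_le (hr : 1 ≤ r) (y : ℝ) : substMap r y ≤ (4 * (2 + y ^ 2)) * r := by
  have hs := sq_sqrt_sq_add (by linarith) y
  have h : substSqrt r y ≤ √(y ^ 2 + 2 * r) := by
    have := le_abs_self y; have := abs_lt_sqrt_sq_add (by linarith : 0 < r) y
    unfold substSqrt; linarith
  calc substMap r y ≤ √(y ^ 2 + 2 * r) ^ 2 :=
        pow_le_pow_left₀ (substSqrt_pos (by linarith) y).le h 2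
    _ ≤ (4 * (2 + y ^ 2)) * r := by nlinarith [sq_nonneg y]

lemma le_substMap (hr : 1 ≤ r) (y : ℝ) : r / (4 * (2 + y ^ 2)) ≤ substMap r y := by
  have hr0 : 0 < r := by linarith
  have hσ := substSqrt_pos hr0 y
  have hs := sq_sqrt_sq_add hr0 y
  have h' : r / (2 * substSqrt r y) ≤ √(y ^ 2 + 2 * r) := by
    rw [div_two_mul_substSqrt hr0]
    linarith [neg_abs_le y, abs_lt_sqrt_sq_add hr0 y]
  have h : r / (2 * √(y ^ 2 + 2 * r)) ≤ substSqrt r y := by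
    rw [div_le_iff₀ (by positivity)] at h' ⊢
    linarith
  calc r / (4 * (2 + y ^ 2)) ≤ (r / (2 * √(y ^ 2 + 2 * r))) ^ 2 := by
        rw [div_pow, mul_pow, hs, div_le_div_iff₀ (by positivity) (by positivity)]
        nlinarith [mul_nonneg (mul_nonneg hr0.le (sub_nonneg.2 hr)) (sq_nonneg y)]
    _ ≤ substMap r y := pow_le_pow_left₀ (by positivity) h 2

lemma integrableOn_Ioi_and_setIntegral_le_of_substMap (hr : 0 < r) {g Φ : ℝ → ℝ}
    (hg : ContinuousOn g (Ioi 0)) (hg0 : ∀ t ∈ Ioi 0, 0 ≤ g t) (hΦ : Integrable Φ)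
    (hgΦ : ∀ y, 2 * substMap r y / √(y ^ 2 + 2 * r) * g (substMap r y) ≤ Φ y) :
    IntegrableOn g (Ioi 0) ∧ ∫ t in Ioi 0, g t ≤ ∫ y, Φ y := by
  set J := fun y => 2 * substMap r y / √(y ^ 2 + 2 * r)
  have hs : ∀ y, 0 < √(y ^ 2 + 2 * r) := fun y => sqrt_sq_add_pos hr y
  have hJ : ∀ y, 0 < J y := fun y => div_pos (by linarith [substMap_pos hr y]) (hs y)
  have hcont : Continuous fun y => J y * g (substMap r y) :=
    ((continuous_const.mul (continuous_substMap r)).div (by fun_prop) fun y => (hs y).ne').mul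
      (hg.comp_continuous (continuous_substMap r) (substMap_pos hr))
  have hnonneg : ∀ y, 0 ≤ J y * g (substMap r y) :=
    fun y => mul_nonneg (hJ y).le (hg0 _ (substMap_pos hr y))
  have hint : Integrable fun y => J y * g (substMap r y) :=
    hΦ.mono' hcont.aestronglyMeasurable (Filter.Eventually.of_forall fun y => by
      rw [norm_of_nonneg (hnonneg y)]; exact hgΦ y)
  have himage : substMap r '' univ = Ioi 0 := by rw [image_univ, range_substMap hr]
  have hderiv : ∀ y ∈ univ, HasDerivWithinAt (substMap r) (J y) univ y :=
    fun y _ => (hasDerivAt_substMap hr y).hasDerivWithinAt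
  have hinj : InjOn (substMap r) univ := (strictMono_substMap hr).injective.injOn
  have habs : (fun y => |J y| • g (substMap r y)) = fun y => J y * g (substMap r y) := by
    ext y; rw [abs_of_pos (hJ y), smul_eq_mul]
  rw [← himage, integrableOn_image_iff_integrableOn_abs_deriv_smul MeasurableSet.univ hderiv hinj,
    integral_image_eq_integral_abs_deriv_smul MeasurableSet.univ hderiv hinj, habs,
    integrableOn_univ, setIntegral_univ]
  exact ⟨hint, integral_mono hint hΦ hgΦ⟩

def laplaceIntegrand (r : ℝ) (j : ℤ) (a : ℕ) (t : ℝ) : ℝ :=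
  t ^ j * gaussRate r t ^ (2 * a) * exp (-(2 * t + r ^ 2 / (2 * t)))

lemma continuousOn_laplaceIntegrand (r : ℝ) (j : ℤ) (a : ℕ) :
    ContinuousOn (laplaceIntegrand r j a) (Ioi 0) := by
  intro t (ht : 0 < t)
  apply ContinuousAt.continuousWithinAt
  unfold laplaceIntegrand gaussRate
  fun_prop (disch := simp [ht.ne'])

lemma laplaceIntegrand_nonneg (r : ℝ) (j : ℤ) (a : ℕ) {t : ℝ} (ht : 0 < t) :
    0 ≤ laplaceIntegrand r j a t :=
  mul_nonneg (mul_nonneg (zpow_nonneg ht.le j) ((even_two_mul a).pow_nonneg _)) (exp_nonneg _)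

lemma jacobian_mul_laplaceIntegrand_substMap (hr : 0 < r) (j : ℤ) (a : ℕ) (y : ℝ) :
    2 * substMap r y / √(y ^ 2 + 2 * r) * laplaceIntegrand r j a (substMap r y)
      = 2 * exp (-(2 * r)) * (substMap r y ^ (j + 1 - 2 * a) * (y ^ 2) ^ a
          * (y ^ 2 + 2 * r) ^ a / √(y ^ 2 + 2 * r)) * exp (-(2 * y ^ 2)) := by
  have hT := substMap_pos hr y
  have hzpow : substMap r y ^ (j + 1 - 2 * a)
      = substMap r y ^ j * substMap r y / substMap r y ^ (2 * a) := by
    rw [zpow_sub₀ hT.ne', zpow_add_one₀ hT.ne', ← zpow_natCast]; push_cast; ring_nf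
  have hrate : gaussRate r (substMap r y) ^ (2 * a)
      = (y ^ 2) ^ a * (y ^ 2 + 2 * r) ^ a / substMap r y ^ (2 * a) := by
    rw [gaussRate_substMap hr, pow_mul, div_pow, neg_sq, mul_pow, sq_sqrt_sq_add hr, div_pow,
      mul_pow]
    ring
  unfold laplaceIntegrand
  rw [hrate, two_mul_substMap_add hr, hzpow, neg_add, exp_add]
  field_simp

lemma jacobian_mul_laplaceIntegrand_substMap_le (hr : 1 ≤ r) (j : ℤ) (a : ℕ) (y : ℝ) :
    2 * substMap r y / √(y ^ 2 + 2 * r) * laplaceIntegrand r j a (substMap r y)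
      ≤ 2 * 4 ^ (j + 1 - 2 * a).natAbs * (r ^ ((j : ℝ) + 1 / 2 - a) * exp (-(2 * r)))
        * ((2 + y ^ 2) ^ ((j + 1 - 2 * a).natAbs + 2 * a) * exp (-(2 * y ^ 2))) := by
  have hr0 : 0 < r := by linarith
  set i := j + 1 - 2 * (a : ℤ)
  have hT : substMap r y ^ i ≤ (4 * (2 + y ^ 2)) ^ i.natAbs * r ^ i :=
    zpow_le_pow_natAbs_mul_zpow (by positivity) hr0 (le_substMap hr y) (substMap_le hr y) i
  have hs : y ^ 2 + 2 * r ≤ (2 + y ^ 2) * r := by nlinarith [sq_nonneg y]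
  have hrpow : r ^ i * r ^ a / √r = r ^ ((j : ℝ) + 1 / 2 - a) := by
    rw [sqrt_eq_rpow, ← rpow_intCast, ← rpow_natCast, ← rpow_add hr0, ← rpow_sub hr0]
    push_cast [i]
    ring_nf
  rw [jacobian_mul_laplaceIntegrand_substMap hr0]
  calc _ ≤ 2 * exp (-(2 * r)) * ((4 * (2 + y ^ 2)) ^ i.natAbs * r ^ i * (2 + y ^ 2) ^ a
          * ((2 + y ^ 2) * r) ^ a / √r) * exp (-(2 * y ^ 2)) := by
        gcongr
        · linarith
        · nlinarith [sq_nonneg y]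
    _ = _ := by rw [← hrpow, mul_pow, mul_pow]; ring

lemma exists_setIntegral_laplaceIntegrand_le (j : ℤ) (a : ℕ) :
    ∃ C, 0 ≤ C ∧ ∀ r : ℝ, 1 ≤ r → IntegrableOn (laplaceIntegrand r j a) (Ioi 0) ∧
      ∫ t in Ioi 0, laplaceIntegrand r j a t
        ≤ C * r ^ ((j : ℝ) + 1 / 2 - a) * exp (-(2 * r)) := by
  set L := (j + 1 - 2 * a).natAbs + 2 * a
  set K : ℝ := 2 * 4 ^ (j + 1 - 2 * a).natAbs
  refine ⟨K * ∫ y, (2 + y ^ 2) ^ L * exp (-(2 * y ^ 2)),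
    mul_nonneg (by positivity) (integral_nonneg fun y => by positivity), fun r hr => ?_⟩
  have hgauss := integrable_add_sq_pow_mul_exp_neg_two_mul_sq zero_le_two L
  obtain ⟨hint, hle⟩ := integrableOn_Ioi_and_setIntegral_le_of_substMap (by linarith)
    (continuousOn_laplaceIntegrand r j a) (fun t ht => laplaceIntegrand_nonneg r j a ht)
    (hgauss.const_mul (K * (r ^ ((j : ℝ) + 1 / 2 - a) * exp (-(2 * r)))))
    (jacobian_mul_laplaceIntegrand_substMap_le hr j a)
  refine ⟨hint, hle.trans_eq ?_⟩
  rw [integral_const_mul]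
  ring

end Substitution

section Energy

variable {n k : ℕ}

def energyDensity (n k : ℕ) (q : ℝ → ℝ → ℝ) (r t : ℝ) : ℝ :=
  (t ^ k * heatProfile n r t * q r t) ^ 2 / t

lemma energyDensity_nonneg (q : ℝ → ℝ → ℝ) (r : ℝ) {t : ℝ} (ht : 0 < t) :
    0 ≤ energyDensity n k q r t :=
  div_nonneg (sq_nonneg _) ht.le

lemma continuousOn_energyDensity {q : ℝ → ℝ → ℝ} {r : ℝ}
    (hq : ContinuousOn (q r) (Ioi 0)) :
    ContinuousOn (energyDensity n k q r) (Ioi 0) :=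
  ((((continuousOn_pow k).mul (continuousOn_heatProfile n r)).mul hq).pow 2).div continuousOn_id
    fun _ ht => ne_of_gt ht

lemma energyDensity_admissibleMonomial (a b : ℕ) (r : ℝ) {t : ℝ} (ht : 0 < t) :
    energyDensity n k (admissibleMonomial (a, b)) r t
      = ((4 * π) ^ n)⁻¹ * laplaceIntegrand r (2 * k - n - 2 * b - 1) a t := by
  have hzpow : t ^ (2 * k - n - 2 * b - 1 : ℤ)
      = t ^ (-(n : ℤ)) * t ^ (2 * k) / t ^ (2 * b + 1) := by
    rw [show (2 * k - n - 2 * b - 1 : ℤ)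
        = -(n : ℤ) + ((2 * k : ℕ) : ℤ) - ((2 * b + 1 : ℕ) : ℤ) by push_cast; ring,
      zpow_sub₀ ht.ne', zpow_add₀ ht.ne', zpow_natCast, zpow_natCast]
  rw [energyDensity, laplaceIntegrand, mul_pow, mul_pow, heatProfile_sq n r ht, hzpow]
  simp only [admissibleMonomial, inv_pow]
  field_simp
  ring

/-- The continuity clause supplies the measurability needed to bound the energy of a sum. -/
def HasEnergyBound (n k : ℕ) (q : ℝ → ℝ → ℝ) : Prop :=
  (∀ r, ContinuousOn (q r) (Ioi 0)) ∧ ∃ C, ∀ r : ℝ, 1 ≤ r →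
    IntegrableOn (energyDensity n k q r) (Ioi 0) ∧
      ∫ t in Ioi 0, energyDensity n k q r t ≤ C * r ^ ((k : ℝ) - n - 1 / 2) * exp (-(2 * r))

lemma hasEnergyBound_admissibleMonomial {a b : ℕ} (hab : k ≤ a + 2 * b) :
    HasEnergyBound n k (admissibleMonomial (a, b)) := by
  obtain ⟨C, hC0, hC⟩ := exists_setIntegral_laplaceIntegrand_le (2 * k - n - 2 * b - 1) a
  refine ⟨fun r t ht => (hasDerivAt_admissibleMonomial r a b (ne_of_gt ht)).continuousAt
    |>.continuousWithinAt, ((4 * π) ^ n)⁻¹ * C, fun r hr => ?_⟩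
  obtain ⟨hint, hle⟩ := hC r hr
  have heq : EqOn (energyDensity n k (admissibleMonomial (a, b)) r)
      (fun t => ((4 * π) ^ n)⁻¹ * laplaceIntegrand r (2 * k - n - 2 * b - 1) a t) (Ioi 0) :=
    fun t ht => energyDensity_admissibleMonomial a b r ht
  have hexponent : ((2 * k - n - 2 * b - 1 : ℤ) : ℝ) + 1 / 2 - a ≤ (k : ℝ) - n - 1 / 2 := by
    have : (k : ℝ) ≤ a + 2 * b := by exact_mod_cast hab
    push_cast
    linarith
  refine ⟨IntegrableOn.congr_fun (hint.const_mul _) heq.symm measurableSet_Ioi, ?_⟩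
  rw [setIntegral_congr_fun measurableSet_Ioi heq, integral_const_mul, mul_assoc, mul_assoc]
  gcongr
  exact (hle.trans_eq (mul_assoc _ _ _)).trans (by gcongr)

lemma HasEnergyBound.zero : HasEnergyBound n k 0 :=
  ⟨fun _ => continuousOn_const, 0, fun r _ => by
    rw [show energyDensity n k 0 r = fun _ => 0 from funext fun t => by simp [energyDensity]]
    exact ⟨integrableOn_zero, by simp⟩⟩

lemma HasEnergyBound.smul {q : ℝ → ℝ → ℝ} (h : HasEnergyBound n k q) (c : ℝ) :
    HasEnergyBound n k (c • q) := by
  obtain ⟨hcont, C, hC⟩ := h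
  have hscale : ∀ r, energyDensity n k (c • q) r = fun t => c ^ 2 * energyDensity n k q r t :=
    fun r => funext fun t => by simp only [energyDensity, Pi.smul_apply, smul_eq_mul]; ring
  refine ⟨fun r => (hcont r).const_smul c, c ^ 2 * C, fun r hr => ?_⟩
  obtain ⟨hint, hle⟩ := hC r hr
  rw [hscale, integral_const_mul, mul_assoc, mul_assoc]
  exact ⟨hint.const_mul _, by gcongr; rwa [← mul_assoc]⟩

lemma HasEnergyBound.add {q₁ q₂ : ℝ → ℝ → ℝ} (h₁ : HasEnergyBound n k q₁)
    (h₂ : HasEnergyBound n k q₂) : HasEnergyBound n k (q₁ + q₂) := by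
  obtain ⟨hcont₁, C₁, hC₁⟩ := h₁
  obtain ⟨hcont₂, C₂, hC₂⟩ := h₂
  refine ⟨fun r => (hcont₁ r).add (hcont₂ r), 2 * C₁ + 2 * C₂, fun r hr => ?_⟩
  obtain ⟨hint₁, hle₁⟩ := hC₁ r hr
  obtain ⟨hint₂, hle₂⟩ := hC₂ r hr
  have hmajorant : IntegrableOn
      (fun t => 2 * energyDensity n k q₁ r t + 2 * energyDensity n k q₂ r t) (Ioi 0) :=
    (hint₁.const_mul 2).add (hint₂.const_mul 2)
  have hpointwise : ∀ t ∈ Ioi (0 : ℝ), energyDensity n k (q₁ + q₂) r t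
      ≤ 2 * energyDensity n k q₁ r t + 2 * energyDensity n k q₂ r t :=
    fun t (ht : 0 < t) => by
      simp only [energyDensity, Pi.add_apply, mul_add]
      rw [← mul_div_assoc, ← mul_div_assoc, ← add_div]
      exact div_le_div_of_nonneg_right (add_sq_le.trans_eq (by ring)) ht.le
  have hmeas : AEStronglyMeasurable (energyDensity n k (q₁ + q₂) r) (volume.restrict (Ioi 0)) :=
    (continuousOn_energyDensity ((hcont₁ r).add (hcont₂ r))).aestronglyMeasurable
      measurableSet_Ioi
  have hint : IntegrableOn (energyDensity n k (q₁ + q₂) r) (Ioi 0) :=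
    hmajorant.mono' hmeas <| (ae_restrict_iff' measurableSet_Ioi).2 <| Filter.Eventually.of_forall
      fun t ht => by rw [norm_of_nonneg (energyDensity_nonneg _ r ht)]; exact hpointwise t ht
  refine ⟨hint, (setIntegral_mono_on hint hmajorant measurableSet_Ioi hpointwise).trans ?_⟩
  rw [integral_add (hint₁.const_mul 2) (hint₂.const_mul 2), integral_const_mul,
    integral_const_mul]
  linarith

lemma hasEnergyBound_of_mem_admissible {q : ℝ → ℝ → ℝ} (hq : q ∈ admissible k) :
    HasEnergyBound n k q := by
  induction hq using Submodule.span_induction with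
  | mem q hq =>
    obtain ⟨⟨a, b⟩, hab, rfl⟩ := hq
    exact hasEnergyBound_admissibleMonomial hab
  | zero => exact HasEnergyBound.zero
  | add _ _ _ _ h₁ h₂ => exact h₁.add h₂
  | smul c _ _ h => exact h.smul c

end Energy

end DriftHeatKernel

end

open DriftHeatKernel in
theorem stmt19_general (n : ℕ) (hn : 0 < n) (k : ℕ) :
    ∃ C : ℝ, 0 < C ∧ ∀ x y : EuclideanSpace ℝ (Fin n), ‖x - y‖ > 1 →
      (∫ t in Set.Ioi (0:ℝ),
          (t ^ k * iteratedDeriv k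
            (fun s => (4 * π * s) ^ (-(n : ℝ) / 2) * Real.exp (-x ⟨0, hn⟩ - y ⟨0, hn⟩) *
              Real.exp (-s) * Real.exp (-‖x - y‖ ^ 2 / (4 * s))) t) ^ 2 / t) ^ ((1:ℝ) / 2) ≤
        C * ‖x - y‖ ^ (((k : ℝ) - n) / 2 - 1 / 4) *
          Real.exp (-x ⟨0, hn⟩ - y ⟨0, hn⟩ - ‖x - y‖) := by
  obtain ⟨q, hq, hiter⟩ := exists_iteratedDeriv_heatProfile n k
  obtain ⟨-, C, hC⟩ := hasEnergyBound_of_mem_admissible (n := n) hq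
  refine ⟨√(max C 1), by positivity, fun x y hxy => ?_⟩
  set c := exp (-x ⟨0, hn⟩ - y ⟨0, hn⟩)
  set r := ‖x - y‖
  have hkernel : (fun s => (4 * π * s) ^ (-(n : ℝ) / 2) * c * exp (-s) * exp (-r ^ 2 / (4 * s)))
      = fun s => c * heatProfile n r s := by
    ext s; simp only [heatProfile]; ring
  have hintegrand : EqOn
      (fun t => (t ^ k * iteratedDeriv k (fun s => c * heatProfile n r s) t) ^ 2 / t)
      (fun t => c ^ 2 * energyDensity n k q r t) (Ioi 0) := fun t ht => by
    simp only [iteratedDeriv_const_mul_field, hiter r t ht, energyDensity]; ring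
  obtain ⟨-, hle⟩ := hC r hxy.le
  have henergy : 0 ≤ ∫ t in Ioi 0, energyDensity n k q r t :=
    setIntegral_nonneg measurableSet_Ioi fun t ht => energyDensity_nonneg q r ht
  rw [hkernel, setIntegral_congr_fun measurableSet_Ioi hintegrand, integral_const_mul,
    sub_eq_add_neg _ r, exp_add,
    show ((k : ℝ) - n) / 2 - 1 / 4 = ((k : ℝ) - n - 1 / 2) / 2 by ring,
    ← rpow_half_sq_mul_rpow_mul_exp (exp_pos _) (by positivity) (by linarith)]
  gcongr
  exact hle.trans (by gcongr; exact le_max_left C 1)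

theorem stmt19 (n : ℕ) (hn : 0 < n) (k : ℕ) (hk : 1 ≤ k) :
    ∃ C : ℝ, 0 < C ∧ ∀ x y : EuclideanSpace ℝ (Fin n), ‖x - y‖ > 1 →
      (∫ t in Set.Ioi (0:ℝ),
          (t ^ k * iteratedDeriv k
            (fun s => (4 * π * s) ^ (-(n : ℝ) / 2) * Real.exp (-x ⟨0, hn⟩ - y ⟨0, hn⟩) *
              Real.exp (-s) * Real.exp (-‖x - y‖ ^ 2 / (4 * s))) t) ^ 2 / t) ^ ((1:ℝ) / 2) ≤
        C * ‖x - y‖ ^ (((k : ℝ) - n) / 2 - 1 / 4) *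
          Real.exp (-x ⟨0, hn⟩ - y ⟨0, hn⟩ - ‖x - y‖) :=
  stmt19_general n hn k
end
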